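/- arXiv:0909.0714 — 4 statements merged into one kernel-verified Lean document; each statement's English description precedes it below -/
import Mathlib

section
/- If f is a higher order automorphic form of weight k₁ and order s₁ and g is a higher order automorphic form of weight k₂ and order s₂ (with s₁, s₂ ≥ 1), then the pointwise product f·g is a higher order automorphic form of weight k₁ + k₂ and order s₁ + s₂ − 1. -/
noncomputable section

abbrev SL2R := Matrix.SpecialLinearGroup (Fin 2) ℝ

/-- Möbius action of `SL₂(ℝ)` on `ℂ`. -/
def mact (g : SL2R) (z : ℂ) : ℂ :=
  ((((g : Matrix (Fin 2) (Fin 2) ℝ) 0 0 : ℝ) : ℂ) * z + (((g : Matrix (Fin 2) (Fin 2) ℝ) 0 1 : ℝ) : ℂ)) /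
    ((((g : Matrix (Fin 2) (Fin 2) ℝ) 1 0 : ℝ) : ℂ) * z + (((g : Matrix (Fin 2) (Fin 2) ℝ) 1 1 : ℝ) : ℂ))

/-- The automorphy factor `j(γ,z) = cz + d`. -/
def jfac (g : SL2R) (z : ℂ) : ℂ :=
  (((g : Matrix (Fin 2) (Fin 2) ℝ) 1 0 : ℝ) : ℂ) * z + (((g : Matrix (Fin 2) (Fin 2) ℝ) 1 1 : ℝ) : ℂ)

/-- The weight-`k` slash action `(f|_k γ)(z) = j(γ,z)^{-k} f(γz)`. -/
def slash (k : ℤ) (f : ℂ → ℂ) (g : SL2R) : ℂ → ℂ :=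
  fun z => jfac g z ^ (-k) * f (mact g z)

variable (Γ : Subgroup SL2R)

/-- The augmentation (degree) map `ℤ[Γ] → ℤ`. -/
def degMap : MonoidAlgebra ℤ Γ →+* ℤ :=
  ((MonoidAlgebra.lift ℤ ℤ Γ) 1).toRingHom

/-- The augmentation ideal `J = ker(deg)`. -/
def augIdeal : Ideal (MonoidAlgebra ℤ Γ) := RingHom.ker (degMap Γ)

/-- The slash action extended `ℤ`-linearly to the group ring `ℤ[Γ]`. -/
def slashL (k : ℤ) (f : ℂ → ℂ) (x : MonoidAlgebra ℤ Γ) : ℂ → ℂ :=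
  fun z => x.coeff.sum fun g a => (a : ℂ) * slash k f (g : SL2R) z

/-- The space `M_k^s(Γ)` of higher order automorphic forms of weight `k`
and order `s` (on the upper half-plane), with `M_k^0(Γ) = ℂ` the constants. -/
def HO (k : ℤ) (s : ℕ) : Set (ℂ → ℂ) :=
  if s = 0 then {f | ∃ c : ℂ, ∀ z : ℂ, 0 < z.im → f z = c}
  else {f | ∀ x ∈ (augIdeal Γ) ^ s, ∀ z : ℂ, 0 < z.im → slashL Γ k f x z = 0}

/-! The augmentation ideal `J` is two-sided and spanned over `ℤ` by the elements `γ - 1`, so `f` is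
killed by `J^(s+1)` exactly when every `f|γ - f` is killed by `J^s`. The Leibniz rule
`(fg)|γ - fg = (f|γ - f)(g|γ) + f(g|γ - g)` then lowers the total order by one, and induction on it
ends when a factor is killed by `J^0 = ℤ[Γ]`, i.e. vanishes on `ℍ`. -/

open UpperHalfPlane MonoidAlgebra

lemma mact_coe (g : SL2R) (τ : ℍ) : mact g τ = ↑(g • τ) := by
  simp [mact, coe_specialLinearGroup_apply]

lemma mact_eq_num_div_denom (g : SL2R) (z : ℂ) :
    mact g z = num (g : GL (Fin 2) ℝ) z / denom (g : GL (Fin 2) ℝ) z := by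
  simp [mact, num, denom]

lemma jfac_eq_denom (g : SL2R) (z : ℂ) : jfac g z = denom (g : GL (Fin 2) ℝ) z := by
  simp [jfac, denom]

lemma jfac_ne_zero (g : SL2R) (τ : ℍ) : jfac g τ ≠ 0 := by
  rw [jfac_eq_denom]
  exact denom_ne_zero _ τ

lemma jfac_mul (g h : SL2R) (τ : ℍ) : jfac (g * h) τ = jfac g (mact h τ) * jfac h τ := by
  simp only [jfac_eq_denom, map_mul, mact_eq_num_div_denom]
  exact denom_cocycle _ _ τ.im_ne_zero

lemma mact_mul (g h : SL2R) (τ : ℍ) : mact (g * h) τ = mact g (mact h τ) := by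
  rw [mact_coe, mact_coe, mact_coe, mul_smul]

lemma slash_one (k : ℤ) (f : ℂ → ℂ) (z : ℂ) : slash k f 1 z = f z := by
  simp [slash, jfac, mact]

lemma slash_mul (k : ℤ) (f : ℂ → ℂ) (g h : SL2R) (τ : ℍ) :
    slash k f (g * h) τ = slash k (slash k f g) h τ := by
  simp only [slash]
  rw [jfac_mul, mact_mul, mul_zpow]
  ring

lemma mul_slash (k₁ k₂ : ℤ) (f g : ℂ → ℂ) (γ : SL2R) (τ : ℍ) :
    slash (k₁ + k₂) (f * g) γ τ = slash k₁ f γ τ * slash k₂ g γ τ := by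
  simp only [slash, Pi.mul_apply]
  rw [neg_add, zpow_add₀ (jfac_ne_zero γ τ)]
  ring

lemma mul_slash_sub_mul (k₁ k₂ : ℤ) (f g : ℂ → ℂ) (γ : SL2R) (τ : ℍ) :
    (slash (k₁ + k₂) (f * g) γ - f * g) τ =
      ((slash k₁ f γ - f) * slash k₂ g γ + f * (slash k₂ g γ - g)) τ := by
  simp only [Pi.sub_apply, Pi.add_apply, Pi.mul_apply, mul_slash]
  ring

lemma slashL_eq_liftNC (k : ℤ) (f : ℂ → ℂ) (x : MonoidAlgebra ℤ Γ) (z : ℂ) :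
    slashL Γ k f x z = liftNC (Int.castAddHom ℂ) (fun γ : Γ => slash k f γ z) x :=
  rfl

lemma slashL_add (k : ℤ) (f : ℂ → ℂ) (x y : MonoidAlgebra ℤ Γ) (z : ℂ) :
    slashL Γ k f (x + y) z = slashL Γ k f x z + slashL Γ k f y z := by
  simp only [slashL_eq_liftNC, map_add]

lemma slashL_sub (k : ℤ) (f : ℂ → ℂ) (x y : MonoidAlgebra ℤ Γ) (z : ℂ) :
    slashL Γ k f (x - y) z = slashL Γ k f x z - slashL Γ k f y z := by
  simp only [slashL_eq_liftNC, map_sub]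

lemma slashL_zsmul (k : ℤ) (f : ℂ → ℂ) (c : ℤ) (x : MonoidAlgebra ℤ Γ) (z : ℂ) :
    slashL Γ k f (c • x) z = c • slashL Γ k f x z := by
  simp only [slashL_eq_liftNC, map_zsmul]

lemma slashL_single (k : ℤ) (f : ℂ → ℂ) (γ : Γ) (a : ℤ) (z : ℂ) :
    slashL Γ k f (single γ a) z = a * slash k f γ z := by
  simp [slashL_eq_liftNC]

lemma slashL_one (k : ℤ) (f : ℂ → ℂ) (z : ℂ) : slashL Γ k f 1 z = f z := by
  simp [one_def, slashL_single, slash_one]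

lemma slashL_fun_add (k : ℤ) (f g : ℂ → ℂ) (x : MonoidAlgebra ℤ Γ) (z : ℂ) :
    slashL Γ k (f + g) x z = slashL Γ k f x z + slashL Γ k g x z := by
  induction x using MonoidAlgebra.induction_linear with
  | zero => simp [slashL_eq_liftNC]
  | add x y hx hy => rw [slashL_add, slashL_add, slashL_add, hx, hy]; ring
  | single γ a => simp only [slashL_single, slash, Pi.add_apply]; ring

lemma slashL_fun_sub (k : ℤ) (f g : ℂ → ℂ) (x : MonoidAlgebra ℤ Γ) (z : ℂ) :
    slashL Γ k (f - g) x z = slashL Γ k f x z - slashL Γ k g x z := by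
  induction x using MonoidAlgebra.induction_linear with
  | zero => simp [slashL_eq_liftNC]
  | add x y hx hy => rw [slashL_add, slashL_add, slashL_add, hx, hy]; ring
  | single γ a => simp only [slashL_single, slash, Pi.sub_apply]; ring

lemma slashL_congr (k : ℤ) {f g : ℂ → ℂ} (hfg : ∀ τ : ℍ, f τ = g τ)
    (x : MonoidAlgebra ℤ Γ) (τ : ℍ) : slashL Γ k f x τ = slashL Γ k g x τ := by
  simp only [slashL_eq_liftNC, slash, mact_coe, hfg]

lemma slashL_single_one_mul (k : ℤ) (f : ℂ → ℂ) (γ : Γ) (y : MonoidAlgebra ℤ Γ) (τ : ℍ) :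
    slashL Γ k f (single γ 1 * y) τ = slashL Γ k (slash k f γ) y τ := by
  induction y using MonoidAlgebra.induction_linear with
  | zero => simp [slashL_eq_liftNC]
  | add x y hx hy => rw [mul_add, slashL_add, slashL_add, hx, hy]
  | single δ b =>
    rw [single_mul_single, one_mul, slashL_single, slashL_single, Subgroup.coe_mul, slash_mul]

lemma slashL_single_sub_one_mul (k : ℤ) (f : ℂ → ℂ) (γ : Γ) (y : MonoidAlgebra ℤ Γ) (τ : ℍ) :
    slashL Γ k f ((single γ 1 - 1) * y) τ = slashL Γ k (slash k f γ - f) y τ := by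
  rw [sub_mul, one_mul, slashL_sub, slashL_single_one_mul, slashL_fun_sub]

lemma degMap_single (γ : Γ) (a : ℤ) : degMap Γ (single γ a) = a := by
  simp [degMap, lift_single]

lemma single_sub_one_mem_augIdeal (γ : Γ) : (single γ 1 - 1 : MonoidAlgebra ℤ Γ) ∈ augIdeal Γ := by
  rw [augIdeal, RingHom.mem_ker, map_sub, map_one, degMap_single, sub_self]

instance : (augIdeal Γ).IsTwoSided :=
  inferInstanceAs (RingHom.ker (degMap Γ)).IsTwoSided

lemma sub_degMap_smul_one_mem_span (x : MonoidAlgebra ℤ Γ) :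
    x - degMap Γ x • 1 ∈ Submodule.span ℤ (Set.range fun γ : Γ => single γ 1 - 1) := by
  induction x using MonoidAlgebra.induction_linear with
  | zero => simp
  | add x y hx hy =>
    rw [map_add, add_smul, add_sub_add_comm]
    exact add_mem hx hy
  | single γ a =>
    have h : single γ a - degMap Γ (single γ a) • 1 = a • (single γ 1 - 1 : MonoidAlgebra ℤ Γ) := by
      rw [degMap_single, smul_sub, smul_single', mul_one]
    rw [h]
    exact Submodule.smul_mem _ _ (Submodule.subset_span ⟨γ, rfl⟩)

lemma mem_span_single_sub_one_of_mem_augIdeal {x : MonoidAlgebra ℤ Γ} (hx : x ∈ augIdeal Γ) :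
    x ∈ Submodule.span ℤ (Set.range fun γ : Γ => single γ 1 - 1) := by
  simpa [(RingHom.mem_ker).1 hx] using sub_degMap_smul_one_mem_span Γ x

def AnnihilatedByAugPow (k : ℤ) (s : ℕ) (f : ℂ → ℂ) : Prop :=
  ∀ x ∈ augIdeal Γ ^ s, ∀ τ : ℍ, slashL Γ k f x τ = 0

namespace AnnihilatedByAugPow

variable {Γ} {k : ℤ} {s : ℕ} {f g : ℂ → ℂ}

lemma congr (hf : AnnihilatedByAugPow Γ k s f) (hfg : ∀ τ : ℍ, f τ = g τ) :
    AnnihilatedByAugPow Γ k s g := fun x hx τ => by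
  rw [← slashL_congr Γ k hfg, hf x hx]

lemma of_eq_zero (hf : ∀ τ : ℍ, f τ = 0) : AnnihilatedByAugPow Γ k s f := fun x _ τ => by
  rw [slashL_congr Γ k (g := 0) hf]
  simp [slashL, slash]

lemma eq_zero_of_zero (hf : AnnihilatedByAugPow Γ k 0 f) (τ : ℍ) : f τ = 0 := by
  simpa [slashL_one] using hf 1 (by rw [Submodule.pow_zero, Ideal.one_eq_top]; trivial) τ

lemma add (hf : AnnihilatedByAugPow Γ k s f) (hg : AnnihilatedByAugPow Γ k s g) :
    AnnihilatedByAugPow Γ k s (f + g) := fun x hx τ => by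
  rw [slashL_fun_add, hf x hx, hg x hx, add_zero]

lemma succ_iff : AnnihilatedByAugPow Γ k (s + 1) f ↔
    ∀ γ : Γ, AnnihilatedByAugPow Γ k s (slash k f γ - f) := by
  refine ⟨fun hf γ x hx τ => ?_, fun hf x hx τ => ?_⟩
  · rw [← slashL_single_sub_one_mul]
    refine hf _ ?_ τ
    rw [Ideal.IsTwoSided.pow_succ]
    exact Submodule.mul_mem_mul (single_sub_one_mem_augIdeal Γ γ) hx
  · rw [Ideal.IsTwoSided.pow_succ] at hx
    refine Submodule.mul_induction_on hx (fun m hm y hy => ?_)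
      (fun x y hx hy => by rw [slashL_add, hx, hy, add_zero])
    have hspan := mem_span_single_sub_one_of_mem_augIdeal Γ hm
    clear hm
    induction hspan using Submodule.span_induction with
    | mem u hu =>
      obtain ⟨γ, rfl⟩ := hu
      rw [slashL_single_sub_one_mul, hf γ y hy]
    | zero => simp [slashL_eq_liftNC]
    | add u v _ _ hu hv => rw [add_mul, slashL_add, hu, hv, add_zero]
    | smul c u _ hu => rw [smul_mul_assoc, slashL_zsmul, hu, smul_zero]

lemma slash (hf : AnnihilatedByAugPow Γ k s f) (γ : Γ) :
    AnnihilatedByAugPow Γ k s (slash k f γ) := fun x hx τ => by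
  rw [← slashL_single_one_mul, hf _ (Ideal.mul_mem_left _ _ hx)]

lemma mul {k₁ k₂ : ℤ} : ∀ {a b : ℕ} {f g : ℂ → ℂ}, AnnihilatedByAugPow Γ k₁ a f →
    AnnihilatedByAugPow Γ k₂ b g → AnnihilatedByAugPow Γ (k₁ + k₂) (a + b - 1) (f * g)
  | 0, _, _, _, hf, _ => of_eq_zero fun τ => by rw [Pi.mul_apply, hf.eq_zero_of_zero, zero_mul]
  | _, 0, _, _, _, hg => of_eq_zero fun τ => by rw [Pi.mul_apply, hg.eq_zero_of_zero, mul_zero]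
  | a + 1, b + 1, f, g, hf, hg => by
    rw [show a + 1 + (b + 1) - 1 = a + b + 1 by omega, succ_iff]
    intro γ
    refine (add ?_ ?_).congr fun τ => (mul_slash_sub_mul k₁ k₂ f g γ τ).symm
    · simpa using mul (succ_iff.1 hf γ) (hg.slash γ)
    · simpa [Nat.add_right_comm] using mul hf (succ_iff.1 hg γ)

end AnnihilatedByAugPow

lemma mem_HO_iff {k : ℤ} {s : ℕ} (hs : s ≠ 0) {f : ℂ → ℂ} :
    f ∈ HO Γ k s ↔ AnnihilatedByAugPow Γ k s f := by
  rw [HO, if_neg hs]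
  exact ⟨fun h x hx τ => h x hx τ τ.im_pos, fun h x hx z hz => h x hx ⟨z, hz⟩⟩

/-- The product of a weight-`k₁` order-`s₁` form and a weight-`k₂` order-`s₂`
form (`s₁, s₂ ≥ 1`) is a weight-`(k₁+k₂)` order-`(s₁+s₂−1)` form. -/
theorem higher_order_product (Γ : Subgroup SL2R) (k₁ k₂ : ℤ) (s₁ s₂ : ℕ)
    (hs₁ : 1 ≤ s₁) (hs₂ : 1 ≤ s₂) (f g : ℂ → ℂ)
    (hf : f ∈ HO Γ k₁ s₁) (hg : g ∈ HO Γ k₂ s₂) :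
    (fun z => f z * g z) ∈ HO Γ (k₁ + k₂) (s₁ + s₂ - 1) := by
  rw [mem_HO_iff Γ (by omega)] at hf hg ⊢
  exact hf.mul hg
end
end

section
/- (Chen's composition formula) Let ω₁, …, ω_s be smooth 1-forms on a smooth manifold X and let α, β be paths with α(1) = β(0). Then ∫_{αβ} ω₁⋯ω_s = Σ_{i=0}^{s} (∫_α ω₁⋯ω_i)(∫_β ω_{i+1}⋯ω_s), where an empty iterated integral is understood to be 1. -/
noncomputable section

open MeasureTheory

/-- A smooth 1-form on (an open subset of) `ℂ ≅ ℝ²`, given by its value as a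
real-linear functional at each point; its pullback along a path `γ` is
`t ↦ ω(γ(t))(γ'(t)) dt`. -/
abbrev Form1 := ℂ → (ℂ →L[ℝ] ℂ)

/-- The iterated line integral `∫_γ ω₁⋯ω_r = ∫_{0≤t₁≤⋯≤t_r≤1} ∏ᵢ ωᵢ(γ(tᵢ))(γ'(tᵢ))`.
The empty iterated integral is `1`. -/
def itInt (γ : ℝ → ℂ) (ws : List Form1) : ℂ :=
  ∫ t in {t : Fin ws.length → ℝ | Monotone t ∧ ∀ i, t i ∈ Set.Icc (0:ℝ) 1},
    ∏ i : Fin ws.length, (ws.get i) (γ (t i)) (deriv γ (t i))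

/-- Composition of paths `ℝ → ℂ` (parametrized on `[0,1]`). -/
def pathComp (α β : ℝ → ℂ) : ℝ → ℂ :=
  fun t => if t ≤ 1 / 2 then α (2 * t) else β (2 * t - 1)

namespace ChenAux

open Set

def Spx (n : ℕ) : Set (Fin n → ℝ) := {t | Monotone t ∧ ∀ i, t i ∈ Set.Icc (0:ℝ) 1}

lemma measurableSet_Spx (n : ℕ) : MeasurableSet (Spx n) := by
  have h2 : MeasurableSet {t : Fin n → ℝ | Monotone t} := by
    have h1 : {t : Fin n → ℝ | Monotone t}
        = ⋂ (i : Fin n) (j : Fin n) (_ : i ≤ j), {t | t i ≤ t j} := by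
      ext t; simp [Monotone, Set.mem_iInter]
    rw [h1]
    exact MeasurableSet.iInter fun i => .iInter fun j => .iInter fun _ =>
      measurableSet_le (measurable_pi_apply i) (measurable_pi_apply j)
  have h3 : MeasurableSet {t : Fin n → ℝ | ∀ i, t i ∈ Icc (0:ℝ) 1} := by
    have : {t : Fin n → ℝ | ∀ i, t i ∈ Icc (0:ℝ) 1}
        = ⋂ i, (fun t : Fin n → ℝ => t i) ⁻¹' (Icc (0:ℝ) 1) := by
      ext t; simp
    rw [this]
    exact MeasurableSet.iInter fun i => (measurable_pi_apply i) measurableSet_Icc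
  exact h2.inter h3

/-- The "block" region: monotone on the first `k` indices and on the rest,
all coordinates in `[0,1]`. -/
def TSet (n k : ℕ) : Set (Fin n → ℝ) :=
  {u | (∀ i j : Fin n, i ≤ j → (j:ℕ) < k → u i ≤ u j)
     ∧ (∀ i j : Fin n, i ≤ j → k ≤ (i:ℕ) → u i ≤ u j)
     ∧ ∀ i, u i ∈ Icc (0:ℝ) 1}

lemma measurableSet_TSet (n k : ℕ) : MeasurableSet (TSet n k) := by
  have e1 : MeasurableSet {u : Fin n → ℝ |
      ∀ i j : Fin n, i ≤ j → (j:ℕ) < k → u i ≤ u j} := by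
    have : {u : Fin n → ℝ | ∀ i j : Fin n, i ≤ j → (j:ℕ) < k → u i ≤ u j}
        = ⋂ (i : Fin n) (j : Fin n) (_ : i ≤ j) (_ : (j:ℕ) < k),
            {u : Fin n → ℝ | u i ≤ u j} := by
      ext u; simp
    rw [this]
    exact .iInter fun i => .iInter fun j => .iInter fun _ => .iInter fun _ =>
      measurableSet_le (measurable_pi_apply i) (measurable_pi_apply j)
  have e2 : MeasurableSet {u : Fin n → ℝ |
      ∀ i j : Fin n, i ≤ j → k ≤ (i:ℕ) → u i ≤ u j} := by
    have : {u : Fin n → ℝ | ∀ i j : Fin n, i ≤ j → k ≤ (i:ℕ) → u i ≤ u j}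
        = ⋂ (i : Fin n) (j : Fin n) (_ : i ≤ j) (_ : k ≤ (i:ℕ)),
            {u : Fin n → ℝ | u i ≤ u j} := by
      ext u; simp
    rw [this]
    exact .iInter fun i => .iInter fun j => .iInter fun _ => .iInter fun _ =>
      measurableSet_le (measurable_pi_apply i) (measurable_pi_apply j)
  have e3 : MeasurableSet {u : Fin n → ℝ | ∀ i, u i ∈ Icc (0:ℝ) 1} := by
    have : {u : Fin n → ℝ | ∀ i, u i ∈ Icc (0:ℝ) 1}
        = ⋂ i, (fun u : Fin n → ℝ => u i) ⁻¹' (Icc (0:ℝ) 1) := by ext u; simp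
    rw [this]
    exact MeasurableSet.iInter fun i => (measurable_pi_apply i) measurableSet_Icc
  exact e1.inter (e2.inter e3)

/-- The piece of the simplex where the first `k` coordinates are `< 1/2` and
the rest are `≥ 1/2`. -/
def Sk (n k : ℕ) : Set (Fin n → ℝ) :=
  {t | t ∈ Spx n ∧ ∀ i : Fin n, ((i:ℕ) < k → t i < 1/2) ∧ (k ≤ (i:ℕ) → 1/2 ≤ t i)}

lemma measurableSet_Sk (n k : ℕ) : MeasurableSet (Sk n k) := by
  have e1 : MeasurableSet {t : Fin n → ℝ |
      ∀ i : Fin n, ((i:ℕ) < k → t i < 1/2) ∧ (k ≤ (i:ℕ) → 1/2 ≤ t i)} := by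
    have : {t : Fin n → ℝ | ∀ i : Fin n, ((i:ℕ) < k → t i < 1/2) ∧ (k ≤ (i:ℕ) → 1/2 ≤ t i)}
        = (⋂ (i : Fin n) (_ : (i:ℕ) < k), {t : Fin n → ℝ | t i < 1/2})
          ∩ ⋂ (i : Fin n) (_ : k ≤ (i:ℕ)), {t : Fin n → ℝ | 1/2 ≤ t i} := by
      ext t
      simp only [Set.mem_setOf_eq, Set.mem_inter_iff, Set.mem_iInter]
      constructor
      · exact fun h => ⟨fun i hi => (h i).1 hi, fun i hi => (h i).2 hi⟩
      · exact fun h i => ⟨fun hi => h.1 i hi, fun hi => h.2 i hi⟩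
    rw [this]
    exact ((MeasurableSet.iInter fun i => .iInter fun _ =>
        measurableSet_lt (measurable_pi_apply i) measurable_const)).inter
      (MeasurableSet.iInter fun i => .iInter fun _ =>
        measurableSet_le measurable_const (measurable_pi_apply i))
  exact (measurableSet_Spx n).inter e1

lemma integral_cast {n n' : ℕ} (h : n = n') (f : (Fin n → ℝ) → ℂ) :
    ∫ t : Fin n → ℝ, f t = ∫ t : Fin n' → ℝ, f (fun i => t (Fin.cast h i)) := by
  subst h; rfl

lemma Sk_integral_cast {n n' : ℕ} (h : n = n') (k : ℕ) (w : Fin n → Form1) (g : ℝ → ℂ) :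
    ∫ t in Sk n k, ∏ i, w i (g (t i)) (deriv g (t i))
      = ∫ t in Sk n' k, ∏ i : Fin n', w (Fin.cast h.symm i) (g (t i)) (deriv g (t i)) := by
  subst h; rfl

lemma itInt_eq_cast (γ : ℝ → ℂ) (l : List Form1) {n' : ℕ} (h : l.length = n') :
    itInt γ l = ∫ x in Spx n',
      ∏ i : Fin n', l.get (Fin.cast h.symm i) (γ (x i)) (deriv γ (x i)) := by
  subst h; rfl

lemma block_integral (k m : ℕ) (a : Fin k → ℝ → ℂ) (b : Fin m → ℝ → ℂ)
    (F : Fin (k+m) → ℝ → ℂ)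
    (ha : ∀ (i : Fin (k+m)) (h : (i:ℕ) < k), F i = a ⟨i, h⟩)
    (hb : ∀ (i : Fin (k+m)) (h : k ≤ (i:ℕ)), F i = b ⟨(i:ℕ) - k, by omega⟩) :
    ∫ u in TSet (k+m) k, ∏ i, F i (u i)
      = (∫ x in Spx k, ∏ i, a i (x i)) * (∫ y in Spx m, ∏ i, b i (y i)) := by
  classical
  set e : Fin k ⊕ Fin m ≃ Fin (k+m) := finSumFinEquiv with he
  set Φ : ((Fin k → ℝ) × (Fin m → ℝ)) ≃ᵐ (Fin (k+m) → ℝ) :=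
    (MeasurableEquiv.sumPiEquivProdPi (fun _ : Fin k ⊕ Fin m => ℝ)).symm.trans
      (MeasurableEquiv.piCongrLeft (fun _ : Fin (k+m) => ℝ) e) with hΦ
  have mΦ : MeasurePreserving Φ volume volume := by
    have h1 := volume_measurePreserving_piCongrLeft (fun _ : Fin (k+m) => ℝ) e
    have h2 := volume_measurePreserving_sumPiEquivProdPi_symm
      (fun _ : Fin k ⊕ Fin m => ℝ)
    have := h1.comp h2
    exact this
  have hΦl : ∀ (x : Fin k → ℝ) (y : Fin m → ℝ) (i : Fin k),
      Φ (x, y) (Fin.castAdd m i) = x i := by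
    intro x y i
    have : (Fin.castAdd m i) = e (Sum.inl i) := rfl
    rw [hΦ, this]
    simp only [MeasurableEquiv.trans_apply, MeasurableEquiv.coe_piCongrLeft,
      MeasurableEquiv.coe_sumPiEquivProdPi_symm]
    exact Equiv.piCongrLeft_sumInl (fun _ => ℝ) e x y i
  have hΦr : ∀ (x : Fin k → ℝ) (y : Fin m → ℝ) (j : Fin m),
      Φ (x, y) (Fin.natAdd k j) = y j := by
    intro x y j
    have : (Fin.natAdd k j) = e (Sum.inr j) := rfl
    rw [hΦ, this]
    simp only [MeasurableEquiv.trans_apply, MeasurableEquiv.coe_piCongrLeft,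
      MeasurableEquiv.coe_sumPiEquivProdPi_symm]
    exact Equiv.piCongrLeft_sumInr (fun _ => ℝ) e x y j
  have hΦd : ∀ (x : Fin k → ℝ) (y : Fin m → ℝ) (i : Fin (k+m)),
      Φ (x, y) i = if h : (i:ℕ) < k then x ⟨i, h⟩ else y ⟨(i:ℕ) - k, by omega⟩ := by
    intro x y i
    by_cases h : (i:ℕ) < k
    · rw [dif_pos h]
      have h2 := hΦl x y ⟨(i:ℕ), h⟩
      rwa [show Fin.castAdd m ⟨(i:ℕ), h⟩ = i from Fin.ext rfl] at h2
    · rw [dif_neg h]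
      have h2 := hΦr x y ⟨(i:ℕ) - k, by omega⟩
      rwa [show Fin.natAdd k ⟨(i:ℕ) - k, by omega⟩ = i from Fin.ext (by simp; omega)] at h2
  rw [← integral_indicator (measurableSet_TSet (k+m) k),
      ← mΦ.integral_comp Φ.measurableEmbedding
        (fun u => (TSet (k+m) k).indicator (fun u => ∏ i, F i (u i)) u)]
  have key : ∀ p : (Fin k → ℝ) × (Fin m → ℝ),
      (TSet (k+m) k).indicator (fun u => ∏ i, F i (u i)) (Φ p)
        = ((Spx k).indicator (fun x => ∏ i, a i (x i)) p.1)
          * ((Spx m).indicator (fun y => ∏ i, b i (y i)) p.2) := by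
    rintro ⟨x, y⟩
    have hmem : Φ (x, y) ∈ TSet (k+m) k ↔ x ∈ Spx k ∧ y ∈ Spx m := by
      constructor
      · rintro ⟨c1, c2, c3⟩
        refine ⟨⟨fun i j hij => ?_, fun i => ?_⟩, ⟨fun i j hij => ?_, fun i => ?_⟩⟩
        · rw [Fin.le_def] at hij
          have := c1 (Fin.castAdd m i) (Fin.castAdd m j)
            (by rw [Fin.le_def]; simpa using hij)
            (by simpa using j.2)
          rwa [hΦl, hΦl] at this
        · have := c3 (Fin.castAdd m i); rwa [hΦl] at this
        · rw [Fin.le_def] at hij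
          have := c2 (Fin.natAdd k i) (Fin.natAdd k j)
            (by rw [Fin.le_def]; simpa using hij) (by simp)
          rwa [hΦr, hΦr] at this
        · have := c3 (Fin.natAdd k i); rwa [hΦr] at this
      · rintro ⟨⟨hxm, hxi⟩, ⟨hym, hyi⟩⟩
        refine ⟨fun i j hij hjk => ?_, fun i j hij hik => ?_, fun i => ?_⟩
        · rw [Fin.le_def] at hij
          have hik : (i:ℕ) < k := lt_of_le_of_lt hij hjk
          rw [hΦd, hΦd, dif_pos hik, dif_pos hjk]
          exact hxm (by rw [Fin.le_def]; exact hij)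
        · rw [Fin.le_def] at hij
          have hjk : k ≤ (j:ℕ) := le_trans hik hij
          rw [hΦd, hΦd, dif_neg (by omega), dif_neg (by omega)]
          exact hym (by rw [Fin.le_def]; simp only [Fin.mk_le_mk]; omega)
        · rw [hΦd]
          by_cases h : (i:ℕ) < k
          · rw [dif_pos h]; exact hxi _
          · rw [dif_neg h]; exact hyi _
    have hprod : ∏ i, F i (Φ (x, y) i)
        = (∏ i, a i (x i)) * (∏ i, b i (y i)) := by
      rw [Fin.prod_univ_add (f := fun i => F i (Φ (x, y) i))]
      congr 1
      · apply Finset.prod_congr rfl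
        intro i _
        rw [hΦl, ha (Fin.castAdd m i) (by simpa using i.2)]
        exact congrFun (congrArg a (Fin.ext (by simp))) (x i)
      · apply Finset.prod_congr rfl
        intro j _
        rw [hΦr, hb (Fin.natAdd k j) (by simp)]
        exact congrFun (congrArg b (Fin.ext (by simp))) (y j)
    by_cases hx : x ∈ Spx k
    · by_cases hy : y ∈ Spx m
      · rw [Set.indicator_of_mem (hmem.2 ⟨hx, hy⟩), Set.indicator_of_mem hx,
          Set.indicator_of_mem hy, hprod]
      · rw [Set.indicator_of_notMem (fun h => hy (hmem.1 h).2),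
          Set.indicator_of_notMem hy, mul_zero]
    · rw [Set.indicator_of_notMem (fun h => hx (hmem.1 h).1),
        Set.indicator_of_notMem hx, zero_mul]
  calc ∫ p : (Fin k → ℝ) × (Fin m → ℝ),
        (TSet (k+m) k).indicator (fun u => ∏ i, F i (u i)) (Φ p)
      = ∫ p : (Fin k → ℝ) × (Fin m → ℝ),
        ((Spx k).indicator (fun x => ∏ i, a i (x i)) p.1)
          * ((Spx m).indicator (fun y => ∏ i, b i (y i)) p.2) := by
        exact integral_congr_ae (Filter.Eventually.of_forall key)
    _ = (∫ x in Spx k, ∏ i, a i (x i)) * (∫ y in Spx m, ∏ i, b i (y i)) := by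
        rw [Measure.volume_eq_prod, integral_prod_mul,
          integral_indicator (measurableSet_Spx k), integral_indicator (measurableSet_Spx m)]

variable {α β : ℝ → ℂ}

lemma hasDerivAt_double (g : ℝ → ℂ) (hg : Differentiable ℝ g) (t : ℝ) :
    HasDerivAt (fun s => g (2*s)) ((2:ℝ) • deriv g (2*t)) t := by
  have h1 : HasDerivAt (fun s : ℝ => 2*s) 2 t := by
    simpa using (hasDerivAt_id t).const_mul (2:ℝ)
  simpa [Function.comp_def] using ((hg (2*t)).hasDerivAt).scomp t h1

lemma hasDerivAt_double' (g : ℝ → ℂ) (hg : Differentiable ℝ g) (t : ℝ) :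
    HasDerivAt (fun s => g (2*s - 1)) ((2:ℝ) • deriv g (2*t - 1)) t := by
  have h1 : HasDerivAt (fun s : ℝ => 2*s - 1) 2 t := by
    simpa using ((hasDerivAt_id t).const_mul (2:ℝ)).sub_const 1
  simpa [Function.comp_def] using ((hg (2*t - 1)).hasDerivAt).scomp t h1

lemma deriv_pathComp_left (hαd : Differentiable ℝ α) {t : ℝ} (ht : t < 1/2) :
    deriv (pathComp α β) t = (2:ℝ) • deriv α (2*t) := by
  have hev : pathComp α β =ᶠ[nhds t] (fun s => α (2*s)) :=
    Filter.eventuallyEq_of_mem (Iio_mem_nhds ht) (fun s hs => if_pos (le_of_lt hs))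
  rw [hev.deriv_eq]
  exact (hasDerivAt_double α hαd t).deriv

lemma deriv_pathComp_right (hβd : Differentiable ℝ β) {t : ℝ} (ht : 1/2 < t) :
    deriv (pathComp α β) t = (2:ℝ) • deriv β (2*t - 1) := by
  have hev : pathComp α β =ᶠ[nhds t] (fun s => β (2*s - 1)) :=
    Filter.eventuallyEq_of_mem (Ioi_mem_nhds ht) (fun s hs => if_neg (not_le.2 hs))
  rw [hev.deriv_eq]
  exact (hasDerivAt_double' β hβd t).deriv

lemma deriv_pathComp_half (hαd : Differentiable ℝ α) :
    deriv (pathComp α β) (1/2) = 0 ∨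
      deriv (pathComp α β) (1/2) = (2:ℝ) • deriv α 1 := by
  by_cases hdiff : DifferentiableAt ℝ (pathComp α β) (1/2)
  · right
    have h1 : HasDerivAt (fun s => α (2*s)) ((2:ℝ) • deriv α 1) (1/2:ℝ) := by
      have := hasDerivAt_double α hαd (1/2)
      norm_num at this ⊢
      exact this
    have h1' : HasDerivWithinAt (pathComp α β) ((2:ℝ) • deriv α 1) (Iio (1/2:ℝ)) (1/2) :=
      (h1.hasDerivWithinAt).congr (fun s hs => if_pos (le_of_lt hs)) (if_pos le_rfl)
    have h2 : HasDerivWithinAt (pathComp α β) (deriv (pathComp α β) (1/2))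
        (Iio (1/2:ℝ)) (1/2) := hdiff.hasDerivAt.hasDerivWithinAt
    have e1 := h1'.derivWithin (uniqueDiffWithinAt_Iio _)
    have e2 := h2.derivWithin (uniqueDiffWithinAt_Iio _)
    rw [← e1, ← e2]
  · exact Or.inl (deriv_zero_of_not_differentiableAt hdiff)

/-- The main per-piece computation. -/
lemma stepk (k m : ℕ) (w : Fin (k+m) → Form1) (α β : ℝ → ℂ)
    (hαd : Differentiable ℝ α) (hβd : Differentiable ℝ β) :
    ∫ t in Sk (k+m) k, ∏ i, w i (pathComp α β (t i)) (deriv (pathComp α β) (t i))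
      = (∫ x in Spx k, ∏ i : Fin k, w (Fin.castAdd m i) (α (x i)) (deriv α (x i)))
        * (∫ y in Spx m, ∏ j : Fin m, w (Fin.natAdd k j) (β (y j)) (deriv β (y j))) := by
  classical
  set γ := pathComp α β with hγdef
  set F : Fin (k+m) → ℝ → ℂ := fun i x => if (i:ℕ) < k
      then w i (α x) (deriv α x) else w i (β x) (deriv β x) with hF
  set c : Fin (k+m) → ℝ := fun i => if (i:ℕ) < k then 0 else 1 with hc
  set G : (Fin (k+m) → ℝ) → ℂ := fun u => ∏ i, F i (u i) with hG
  have hN : ∀ᵐ t : Fin (k+m) → ℝ, ∀ i, t i ≠ 1/2 := by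
    rw [ae_all_iff]
    intro i
    rw [ae_iff]
    have h0 : {t : Fin (k+m) → ℝ | ¬ t i ≠ 1/2} = {t | t i = 1/2} := by ext t; simp
    rw [h0, volume_pi]
    exact Measure.pi_hyperplane _ i _
  have key : ∀ᵐ t : Fin (k+m) → ℝ,
      (Sk (k+m) k).indicator (fun t => ∏ i, w i (γ (t i)) (deriv γ (t i))) t
        = ((2:ℝ)^(k+m)) • (TSet (k+m) k).indicator G ((2:ℝ) • t - c) := by
    filter_upwards [hN] with t ht
    have hu : ∀ i, ((2:ℝ) • t - c) i = 2 * t i - c i := fun i => rfl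
    have hmem : t ∈ Sk (k+m) k ↔ ((2:ℝ) • t - c) ∈ TSet (k+m) k := by
      constructor
      · rintro ⟨⟨hmono, hicc⟩, hs⟩
        refine ⟨fun i j hij hjk => ?_, fun i j hij hik => ?_, fun i => ?_⟩
        · have hik : (i:ℕ) < k := lt_of_le_of_lt (Fin.le_def.mp hij) hjk
          simp only [hu, hc, Pi.sub_apply, Pi.smul_apply, smul_eq_mul, if_pos hik, if_pos hjk]
          have := hmono hij; linarith
        · have hjk : k ≤ (j:ℕ) := le_trans hik (Fin.le_def.mp hij)
          simp only [hu, hc, Pi.sub_apply, Pi.smul_apply, smul_eq_mul, if_neg (by omega : ¬ (i:ℕ) < k),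
            if_neg (by omega : ¬ (j:ℕ) < k)]
          have := hmono hij; linarith
        · by_cases h : (i:ℕ) < k
          · have h1 := (hs i).1 h
            have h2 := (hicc i).1
            simp only [hu, hc, Pi.sub_apply, Pi.smul_apply, smul_eq_mul, if_pos h]
            constructor <;> [skip; skip] <;> simp <;> linarith
          · have h1 := (hs i).2 (by omega)
            have h2 := (hicc i).2
            simp only [hu, hc, Pi.sub_apply, Pi.smul_apply, smul_eq_mul, if_neg h]
            constructor <;> [skip; skip] <;> simp <;> linarith
      · rintro ⟨c1, c2, c3⟩
        have hlow : ∀ i : Fin (k+m), (i:ℕ) < k → t i < 1/2 := by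
          intro i h
          have h3 := (c3 i).2
          simp only [hu, hc, Pi.sub_apply, Pi.smul_apply, smul_eq_mul, if_pos h] at h3
          rcases lt_or_eq_of_le (by linarith : t i ≤ 1/2) with h'|h'
          · exact h'
          · exact absurd h' (ht i)
        have hhigh : ∀ i : Fin (k+m), k ≤ (i:ℕ) → 1/2 ≤ t i := by
          intro i h
          have h3 := (c3 i).1
          simp only [hu, hc, Pi.sub_apply, Pi.smul_apply, smul_eq_mul, if_neg (by omega : ¬ (i:ℕ) < k)] at h3
          linarith
        refine ⟨⟨fun i j hij => ?_, fun i => ?_⟩, fun i => ⟨hlow i, hhigh i⟩⟩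
        · by_cases hik : (i:ℕ) < k
          · by_cases hjk : (j:ℕ) < k
            · have h4 := c1 i j hij hjk
              simp only [hu, hc, Pi.sub_apply, Pi.smul_apply, smul_eq_mul, if_pos hik, if_pos hjk] at h4; linarith
            · exact le_of_lt (lt_of_lt_of_le (hlow i hik) (hhigh j (by omega)))
          · have hjk : ¬ (j:ℕ) < k := by have := Fin.le_def.mp hij; omega
            have h4 := c2 i j hij (by omega)
            simp only [hu, hc, Pi.sub_apply, Pi.smul_apply, smul_eq_mul, if_neg hik, if_neg hjk] at h4; linarith
        · by_cases h : (i:ℕ) < k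
          · have h3 := c3 i; simp only [hu, hc, Pi.sub_apply, Pi.smul_apply, smul_eq_mul, if_pos h] at h3
            have h2 := hlow i h
            exact ⟨by linarith [h3.1], by linarith⟩
          · have h3 := c3 i; simp only [hu, hc, Pi.sub_apply, Pi.smul_apply, smul_eq_mul, if_neg h] at h3
            exact ⟨by linarith [hhigh i (by omega)], by linarith [h3.2]⟩
    by_cases hts : t ∈ Sk (k+m) k
    · rw [Set.indicator_of_mem hts, Set.indicator_of_mem (hmem.mp hts)]
      have factor : ∀ i : Fin (k+m),
          w i (γ (t i)) (deriv γ (t i)) = (2:ℝ) • F i (((2:ℝ) • t - c) i) := by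
        intro i
        by_cases h : (i:ℕ) < k
        · have h1 : t i < 1/2 := (hts.2 i).1 h
          have hui : ((2:ℝ) • t - c) i = 2 * t i := by
            rw [hu]; simp [hc, if_pos h]
          have hv : γ (t i) = α (2 * t i) := if_pos h1.le
          have hd : deriv γ (t i) = (2:ℝ) • deriv α (2 * t i) :=
            deriv_pathComp_left hαd h1
          rw [hv, hd, _root_.map_smul, hF]
          simp only [if_pos h, hui]
        · have h1 : 1/2 < t i :=
            lt_of_le_of_ne ((hts.2 i).2 (by omega)) (Ne.symm (ht i))
          have hui : ((2:ℝ) • t - c) i = 2 * t i - 1 := by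
            rw [hu]; simp [hc, if_neg h]
          have hv : γ (t i) = β (2 * t i - 1) := if_neg (not_le.2 h1)
          have hd : deriv γ (t i) = (2:ℝ) • deriv β (2 * t i - 1) :=
            deriv_pathComp_right hβd h1
          rw [hv, hd, _root_.map_smul, hF]
          simp only [if_neg h, hui]
      rw [Finset.prod_congr rfl (fun i _ => factor i)]
      have : ∀ i : Fin (k+m), (2:ℝ) • F i (((2:ℝ) • t - c) i)
          = (2:ℂ) * F i (((2:ℝ) • t - c) i) := by
        intro i; rw [Complex.real_smul]; norm_num
      rw [Finset.prod_congr rfl (fun i _ => this i), Finset.prod_mul_distrib,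
        Finset.prod_const, Finset.card_univ, Fintype.card_fin]
      rw [hG]
      rw [Complex.real_smul]
      push_cast
      ring
    · rw [Set.indicator_of_notMem hts,
        Set.indicator_of_notMem (fun h => hts (hmem.mpr h)), smul_zero]
  have hTm := measurableSet_TSet (k+m) k
  have step2 : ∫ t in Sk (k+m) k, ∏ i, w i (γ (t i)) (deriv γ (t i))
      = ∫ u in TSet (k+m) k, G u := by
    calc ∫ t in Sk (k+m) k, ∏ i, w i (γ (t i)) (deriv γ (t i))
        = ∫ t, (Sk (k+m) k).indicator (fun t => ∏ i, w i (γ (t i)) (deriv γ (t i))) t :=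
          (integral_indicator (measurableSet_Sk (k+m) k)).symm
      _ = ∫ t, ((2:ℝ)^(k+m)) • (TSet (k+m) k).indicator G ((2:ℝ) • t - c) :=
          integral_congr_ae key
      _ = ((2:ℝ)^(k+m)) • ∫ t, (TSet (k+m) k).indicator G ((2:ℝ) • t - c) :=
          integral_smul _ _
      _ = ∫ x, (TSet (k+m) k).indicator G x := by
          have h1 := Measure.integral_comp_smul (volume : Measure (Fin (k+m) → ℝ))
            (fun x => (TSet (k+m) k).indicator G (x - c)) 2
          have h2 : (fun t : Fin (k+m) → ℝ =>
              (TSet (k+m) k).indicator G ((2:ℝ) • t - c))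
              = fun t => (fun x => (TSet (k+m) k).indicator G (x - c)) ((2:ℝ) • t) := rfl
          rw [h2, h1]
          rw [integral_sub_right_eq_self (fun x => (TSet (k+m) k).indicator G x) c]
          have h3 : Module.finrank ℝ (Fin (k+m) → ℝ) = k + m := by
            simp [Module.finrank_fin_fun]
          rw [h3, smul_smul, abs_of_pos (by positivity),
            mul_inv_cancel₀ (by positivity), one_smul]
      _ = ∫ u in TSet (k+m) k, G u := integral_indicator hTm
  rw [step2, hG]
  apply block_integral k m
    (fun i x => w (Fin.castAdd m i) (α x) (deriv α x))
    (fun j y => w (Fin.natAdd k j) (β y) (deriv β y)) F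
  · intro i h
    funext x
    rw [hF]
    simp only [if_pos h]
    rw [show Fin.castAdd m ⟨(i:ℕ), h⟩ = i from Fin.ext rfl]
  · intro i h
    funext x
    rw [hF]
    simp only [if_neg (by omega : ¬ (i:ℕ) < k)]
    rw [show Fin.natAdd k ⟨(i:ℕ) - k, by omega⟩ = i from Fin.ext (by simp; omega)]

end ChenAux

open ChenAux Set

/-- Chen's composition formula: for paths `α, β` with `α(1) = β(0)`,
`∫_{αβ} ω₁⋯ω_s = Σ_{i=0}^{s} (∫_α ω₁⋯ω_i)(∫_β ω_{i+1}⋯ω_s)`,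
with the empty iterated integral understood to be `1`. -/
theorem chen_composition (s : ℕ) (ws : List Form1) (hlen : ws.length = s)
    (hws : ∀ w ∈ ws, ContDiff ℝ (⊤ : ℕ∞) w)
    (α β : ℝ → ℂ) (hα : ContDiff ℝ (⊤ : ℕ∞) α) (hβ : ContDiff ℝ (⊤ : ℕ∞) β)
    (hend : α 1 = β 0) :
    itInt (pathComp α β) ws =
      ∑ i ∈ Finset.range (s + 1), itInt α (ws.take i) * itInt β (ws.drop i) := by
  classical
  subst hlen
  have hαd : Differentiable ℝ α := hα.differentiable (by simp)
  have hβd : Differentiable ℝ β := hβ.differentiable (by simp)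
  set γ := pathComp α β with hγdef
  set F : (Fin ws.length → ℝ) → ℂ :=
    fun t => ∏ i, ws.get i (γ (t i)) (deriv γ (t i)) with hFdef
  -- measurability of F
  have hγm : Measurable γ := by
    have h1 : Measurable fun t : ℝ => α (2*t) :=
      (hα.continuous.comp (continuous_const.mul continuous_id)).measurable
    have h2 : Measurable fun t : ℝ => β (2*t - 1) :=
      (hβ.continuous.comp ((continuous_const.mul continuous_id).sub
        continuous_const)).measurable
    exact Measurable.ite (measurableSet_le measurable_id measurable_const) h1 h2
  have hdm : Measurable (deriv γ) := measurable_deriv γ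
  have hFm : Measurable F := by
    apply Finset.measurable_prod
    intro i _
    have hpair : Measurable fun t : Fin ws.length → ℝ =>
        ((ws.get i) (γ (t i)), deriv γ (t i)) :=
      (((hws _ (ws.get_mem i)).continuous.measurable.comp
        (hγm.comp (measurable_pi_apply i)))).prodMk (hdm.comp (measurable_pi_apply i))
    exact isBoundedBilinearMap_apply.continuous.measurable.comp hpair
  -- bounds
  obtain ⟨Ca, hCa⟩ := (isCompact_Icc (a := (0:ℝ)) (b := 2)).exists_bound_of_continuousOn
    (hα.continuous_deriv (by simp)).continuousOn
  obtain ⟨Cb, hCb⟩ := (isCompact_Icc (a := (-1:ℝ)) (b := 1)).exists_bound_of_continuousOn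
    (hβ.continuous_deriv (by simp)).continuousOn
  have hCa0 : 0 ≤ Ca := le_trans (norm_nonneg _) (hCa 0 (by norm_num))
  have hCb0 : 0 ≤ Cb := le_trans (norm_nonneg _) (hCb 0 (by norm_num))
  set D := 2 * max Ca Cb with hDdef
  have hD0 : 0 ≤ D := by
    have := le_max_left Ca Cb; simp only [hDdef]; linarith
  have hD : ∀ t ∈ Icc (0:ℝ) 1, ‖deriv γ t‖ ≤ D := by
    intro t ht
    rcases lt_trichotomy t (1/2) with h|h|h
    · rw [hγdef, deriv_pathComp_left hαd h, norm_smul]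
      have := hCa (2*t) ⟨by linarith [ht.1], by linarith [ht.2]⟩
      have h2 := le_max_left Ca Cb
      simp only [Real.norm_ofNat]
      simp only [hDdef]
      nlinarith [norm_nonneg (deriv α (2*t))]
    · rw [hγdef, h]
      rcases deriv_pathComp_half (β := β) hαd with h0|h2
      · rw [h0]; simpa using hD0
      · rw [h2, norm_smul]
        have := hCa 1 (by norm_num)
        have h3 := le_max_left Ca Cb
        simp only [Real.norm_ofNat, hDdef]
        nlinarith [norm_nonneg (deriv α 1)]
    · rw [hγdef, deriv_pathComp_right hβd h, norm_smul]
      have := hCb (2*t - 1) ⟨by linarith [ht.1], by linarith [ht.2]⟩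
      have h2 := le_max_right Ca Cb
      simp only [Real.norm_ofNat, hDdef]
      nlinarith [norm_nonneg (deriv β (2*t - 1))]
  obtain ⟨Ra, hRa⟩ := (isCompact_Icc (a := (0:ℝ)) (b := 2)).exists_bound_of_continuousOn
    hα.continuous.continuousOn
  obtain ⟨Rb, hRb⟩ := (isCompact_Icc (a := (-1:ℝ)) (b := 1)).exists_bound_of_continuousOn
    hβ.continuous.continuousOn
  set R := max Ra Rb with hRdef
  have hR : ∀ t ∈ Icc (0:ℝ) 1, ‖γ t‖ ≤ R := by
    intro t ht
    by_cases h : t ≤ 1/2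
    · have : γ t = α (2*t) := if_pos h
      rw [this]
      exact le_trans (hRa (2*t) ⟨by linarith [ht.1], by linarith [ht.2]⟩) (le_max_left _ _)
    · have : γ t = β (2*t - 1) := if_neg h
      rw [this]
      push_neg at h
      exact le_trans (hRb (2*t - 1) ⟨by linarith [ht.1], by linarith [ht.2]⟩)
        (le_max_right _ _)
  have hWs : ∀ i : Fin ws.length, ∃ W, ∀ z : ℂ, ‖z‖ ≤ R → ‖ws.get i z‖ ≤ W := by
    intro i
    obtain ⟨W, hW⟩ := (isCompact_closedBall (0:ℂ) R).exists_bound_of_continuousOn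
      (hws _ (ws.get_mem i)).continuous.continuousOn
    exact ⟨W, fun z hz => hW z (by simpa [Metric.mem_closedBall, dist_zero_right] using hz)⟩
  choose Wf hWf using hWs
  obtain ⟨W, hW⟩ := Finset.exists_le (Finset.univ.image Wf)
  set B := max W 0 * max D 0 with hBdef
  have hB0 : 0 ≤ B := mul_nonneg (le_max_right _ _) (le_max_right _ _)
  have hFb : ∀ t : Fin ws.length → ℝ, (∀ i, t i ∈ Icc (0:ℝ) 1) →
      ‖F t‖ ≤ B ^ ws.length := by
    intro t ht
    rw [hFdef]
    simp only
    rw [norm_prod]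
    calc ∏ i, ‖ws.get i (γ (t i)) (deriv γ (t i))‖
        ≤ ∏ _i : Fin ws.length, B := by
          apply Finset.prod_le_prod (fun i _ => norm_nonneg _)
          intro i _
          calc ‖ws.get i (γ (t i)) (deriv γ (t i))‖
              ≤ ‖ws.get i (γ (t i))‖ * ‖deriv γ (t i)‖ :=
                ContinuousLinearMap.le_opNorm _ _
            _ ≤ max W 0 * max D 0 := by
                apply mul_le_mul
                · exact le_trans (hWf i _ (hR _ (ht i)))
                    (le_trans (hW _ (Finset.mem_image_of_mem Wf (Finset.mem_univ i)))
                      (le_max_left _ _))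
                · exact le_trans (hD _ (ht i)) (le_max_left _ _)
                · exact norm_nonneg _
                · exact le_trans (norm_nonneg _)
                    (le_trans (hWf i _ (hR _ (ht i)))
                      (le_trans (hW _ (Finset.mem_image_of_mem Wf (Finset.mem_univ i)))
                        (le_max_left _ _)))
      _ = B ^ ws.length := by rw [Finset.prod_const, Finset.card_univ, Fintype.card_fin]
  -- integrability
  have hInt : ∀ k : ℕ, IntegrableOn F (Sk ws.length k) := by
    intro k
    apply Measure.integrableOn_of_bounded (M := B ^ ws.length)
    · have hsub : Sk ws.length k ⊆ Set.pi univ fun _ : Fin ws.length => Icc (0:ℝ) 1 :=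
        fun t htt i _ => htt.1.2 i
      have : (volume : Measure (Fin ws.length → ℝ))
          (Set.pi univ fun _ : Fin ws.length => Icc (0:ℝ) 1) = 1 := by
        rw [volume_pi_pi]
        simp [Real.volume_Icc]
      exact ne_top_of_le_ne_top (by rw [this]; exact ENNReal.one_ne_top) (measure_mono hsub)
    · exact hFm.aestronglyMeasurable
    · rw [ae_restrict_iff' (measurableSet_Sk ws.length k)]
      exact ae_of_all _ fun t htt => hFb t (fun i => htt.1.2 i)
  -- covering
  have hcover : Spx ws.length = ⋃ k ∈ Finset.range (ws.length + 1), Sk ws.length k := by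
    ext t
    simp only [Set.mem_iUnion, Finset.mem_range, exists_prop]
    constructor
    · intro ht
      have hP : ∃ j, j ≤ ws.length ∧ ∀ i : Fin ws.length, j ≤ (i:ℕ) → 1/2 ≤ t i :=
        ⟨ws.length, le_rfl, fun i hi => absurd i.2 (by omega)⟩
      classical
      obtain ⟨hk1, hk2⟩ := Nat.find_spec hP
      refine ⟨Nat.find hP, by omega, ht, fun i => ⟨fun hik => ?_, fun hik => hk2 i hik⟩⟩
      -- strict on the left
      by_contra hcon
      push_neg at hcon
      -- then (i:ℕ) would satisfy the predicate minus...
      have hmin := Nat.find_min hP (m := (i:ℕ)) hik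
      push_neg at hmin
      rcases hmin (by omega) with ⟨i', hi'1, hi'2⟩
      have : t i ≤ t i' := ht.1 (by rw [Fin.le_def]; exact hi'1)
      linarith
    · rintro ⟨k, _, htt, _⟩; exact htt
  have hdisj : Set.Pairwise ↑(Finset.range (ws.length + 1))
      (Function.onFun Disjoint (Sk ws.length)) := by
    intro k hk k' hk' hne
    simp only [Finset.coe_range, Set.mem_Iio] at hk hk'
    rw [Function.onFun, Set.disjoint_left]
    intro t htk htk'
    rcases Nat.lt_or_ge k k' with h|h
    · have hkn : k < ws.length := by omega
      have h1 := (htk'.2 ⟨k, hkn⟩).1 (by simpa using h)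
      have h2 := (htk.2 ⟨k, hkn⟩).2 (by simp)
      linarith
    · have h' : k' < k := by omega
      have hkn : k' < ws.length := by omega
      have h1 := (htk.2 ⟨k', hkn⟩).1 (by simpa using h')
      have h2 := (htk'.2 ⟨k', hkn⟩).2 (by simp)
      linarith
  have hstart : itInt γ ws = ∫ t in Spx ws.length, F t := rfl
  rw [hstart, hcover,
    integral_biUnion_finset _ (fun k _ => measurableSet_Sk _ k) hdisj (fun k _ => hInt k)]
  apply Finset.sum_congr rfl
  intro k hk
  have hk' : k ≤ ws.length := by
    have := Finset.mem_range.mp hk; omega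
  have hm : ws.length = k + (ws.length - k) := by omega
  have hcast := Sk_integral_cast hm k ws.get γ
  rw [hFdef]
  simp only
  rw [hcast, stepk k (ws.length - k) (fun i => ws.get (Fin.cast hm.symm i)) α β hαd hβd]
  have hlen1 : (ws.take k).length = k := by
    rw [List.length_take]; omega
  have hlen2 : (ws.drop k).length = ws.length - k := by
    rw [List.length_drop]
  rw [itInt_eq_cast α (ws.take k) hlen1, itInt_eq_cast β (ws.drop k) hlen2]
  congr 1
  · apply setIntegral_congr_fun (measurableSet_Spx k)
    intro x _
    apply Finset.prod_congr rfl
    intro i _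
    congr 1
    simp only [List.get_eq_getElem, Fin.coe_cast, Fin.coe_castAdd]
    rw [List.getElem_take]
  · apply setIntegral_congr_fun (measurableSet_Spx (ws.length - k))
    intro y _
    apply Finset.prod_congr rfl
    intro j _
    congr 1
    simp only [List.get_eq_getElem, Fin.coe_cast, Fin.coe_natAdd]
    rw [List.getElem_drop]
end
end

section
/- Let f be a smooth function and ω₁, …, ω_s smooth 1-forms on a manifold M, and γ a path. Then ∫_γ (df) ω₁⋯ω_s = ∫_γ (fω₁)ω₂⋯ω_s − f(γ(0)) ∫_γ ω₁⋯ω_s. -/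
noncomputable section

open MeasureTheory

/-! ### Auxiliary material -/

/-- The standard simplex set used in `itInt`. -/
def simplexSet (n : ℕ) : Set (Fin n → ℝ) :=
  {t | Monotone t ∧ ∀ i, t i ∈ Set.Icc (0:ℝ) 1}

lemma isClosed_simplexSet (n : ℕ) : IsClosed (simplexSet n) := by
  have h1 : IsClosed {t : Fin n → ℝ | Monotone t} := by
    have : {t : Fin n → ℝ | Monotone t} =
        ⋂ (i : Fin n) (j : Fin n) (_ : i ≤ j), {t : Fin n → ℝ | t i ≤ t j} := by
      ext t; simp [Monotone]
    rw [this]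
    exact isClosed_iInter fun i => isClosed_iInter fun j => isClosed_iInter fun _ =>
      isClosed_le (continuous_apply i) (continuous_apply j)
  have h2 : IsClosed {t : Fin n → ℝ | ∀ i, t i ∈ Set.Icc (0:ℝ) 1} := by
    have : {t : Fin n → ℝ | ∀ i, t i ∈ Set.Icc (0:ℝ) 1} =
        ⋂ i, (fun t : Fin n → ℝ => t i) ⁻¹' Set.Icc 0 1 := by ext t; simp
    rw [this]
    exact isClosed_iInter fun i => isClosed_Icc.preimage (continuous_apply i)
  exact h1.inter h2

lemma isCompact_simplexSet (n : ℕ) : IsCompact (simplexSet n) := by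
  refine (isCompact_univ_pi fun _ : Fin n => isCompact_Icc (a := (0:ℝ)) (b := 1)).of_isClosed_subset
    (isClosed_simplexSet n) ?_
  intro t ht
  exact fun i _ => ht.2 i

lemma measurableSet_simplexSet (n : ℕ) : MeasurableSet (simplexSet n) :=
  (isClosed_simplexSet n).measurableSet

lemma mem_simplexSet_succ {k : ℕ} (t : Fin (k + 2) → ℝ) :
    t ∈ simplexSet (k + 2) ↔
      t 0 ∈ Set.Icc (0:ℝ) ((t ∘ Fin.succ) 0) ∧ (t ∘ Fin.succ) ∈ simplexSet (k + 1) := by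
  constructor
  · rintro ⟨hm, hi⟩
    exact ⟨⟨(hi 0).1, hm (Fin.zero_le 1)⟩, hm.comp (Fin.strictMono_succ).monotone,
      fun i => hi _⟩
  · rintro ⟨hx, hm, hi⟩
    refine ⟨Fin.monotone_iff_le_succ.2 ?_, ?_⟩
    · intro i
      induction i using Fin.cases with
      | zero => simpa using hx.2
      | succ j =>
        have := Fin.monotone_iff_le_succ.1 hm j
        simpa [← Fin.succ_castSucc] using this
    · intro i
      induction i using Fin.cases with
      | zero => exact ⟨hx.1, hx.2.trans (hi 0).2⟩
      | succ j => exact hi j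

lemma continuous_pullback {w : Form1} (hw : Continuous w) {γ : ℝ → ℂ}
    (hγ : ContDiff ℝ (⊤ : ℕ∞) γ) : Continuous fun u : ℝ => w (γ u) (deriv γ u) :=
  isBoundedBilinearMap_apply.continuous.comp
    ((hw.comp hγ.continuous).prodMk (hγ.continuous_deriv (by simp)))

/-- The key Fubini step: integrating out the first (innermost) variable of the simplex. -/
lemma simplex_first_integral (k : ℕ) (h : Fin (k + 2) → ℝ → ℂ)
    (hc : ∀ i, Continuous (h i)) :
    (∫ t in simplexSet (k + 2), ∏ i, h i (t i)) =
      ∫ s in simplexSet (k + 1),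
        (∫ x in Set.Icc (0:ℝ) (s 0), h 0 x) * ∏ i : Fin (k + 1), h i.succ (s i) := by
  set F : (Fin (k + 2) → ℝ) → ℂ := fun t => ∏ i, h i (t i) with hF
  have hFc : Continuous F := continuous_finset_prod _ fun i _ => (hc i).comp (continuous_apply i)
  set Q : (Fin (k + 1) → ℝ) → ℂ := fun s => ∏ i : Fin (k + 1), h i.succ (s i) with hQdef
  set H : ℝ × (Fin (k + 1) → ℝ) → ℂ := fun p =>
    (Set.Icc (0:ℝ) (p.2 0)).indicator (h 0) p.1 * (simplexSet (k + 1)).indicator Q p.2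
    with hHdef
  set e := MeasurableEquiv.piFinSuccAbove (fun _ : Fin (k + 2) => ℝ) 0 with he
  have happ : ∀ t : Fin (k + 2) → ℝ, e t = (t 0, t ∘ Fin.succ) := by
    intro t
    simp only [he, MeasurableEquiv.piFinSuccAbove_apply]
    exact Prod.ext rfl (funext fun j => rfl)
  have hHe : ∀ t, H (e t) = (simplexSet (k + 2)).indicator F t := by
    intro t
    rw [happ t]
    by_cases ht : t ∈ simplexSet (k + 2)
    · have hmem := (mem_simplexSet_succ t).1 ht
      rw [Set.indicator_of_mem ht]
      simp only [hHdef]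
      rw [Set.indicator_of_mem hmem.1, Set.indicator_of_mem hmem.2]
      show h 0 (t 0) * Q (t ∘ Fin.succ) = ∏ i : Fin (k + 2), h i (t i)
      rw [Fin.prod_univ_succ]
      rfl
    · rw [Set.indicator_of_notMem ht]
      by_cases h2 : (t ∘ Fin.succ) ∈ simplexSet (k + 1)
      · have h1 : t 0 ∉ Set.Icc (0:ℝ) ((t ∘ Fin.succ) 0) := by
          intro hx
          exact ht ((mem_simplexSet_succ t).2 ⟨hx, h2⟩)
        simp only [hHdef]
        rw [Set.indicator_of_notMem h1, zero_mul]
      · simp only [hHdef]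
        rw [Set.indicator_of_notMem h2, mul_zero]
  have hIntInd : Integrable ((simplexSet (k + 2)).indicator F) := by
    rw [integrable_indicator_iff (measurableSet_simplexSet _)]
    exact hFc.continuousOn.integrableOn_compact (isCompact_simplexSet _)
  have hmp := volume_preserving_piFinSuccAbove (fun _ : Fin (k + 2) => ℝ) 0
  have hHint : Integrable H := by
    rw [← hmp.integrable_comp_emb e.measurableEmbedding]
    have : H ∘ e = (simplexSet (k + 2)).indicator F := funext hHe
    rw [this]
    exact hIntInd
  have hHint' : Integrable H (volume.prod volume) := by
    rwa [← Measure.volume_eq_prod]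
  calc
    (∫ t in simplexSet (k + 2), F t)
        = ∫ t, (simplexSet (k + 2)).indicator F t :=
          (integral_indicator (measurableSet_simplexSet _)).symm
    _ = ∫ t, H (e t) := by simp_rw [hHe]
    _ = ∫ p, H p := hmp.integral_comp e.measurableEmbedding H
    _ = ∫ s, ∫ x, H (x, s) := by
          rw [Measure.volume_eq_prod]
          exact integral_prod_symm H hHint'
    _ = ∫ s, (simplexSet (k + 1)).indicator
            (fun s => (∫ x in Set.Icc (0:ℝ) (s 0), h 0 x) * Q s) s := by
          refine integral_congr_ae (Filter.Eventually.of_forall fun s => ?_)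
          show (∫ x, H (x, s)) = _
          have : (∫ x, H (x, s)) =
              (∫ x in Set.Icc (0:ℝ) (s 0), h 0 x) * (simplexSet (k + 1)).indicator Q s := by
            simp only [hHdef]
            rw [integral_mul_const, integral_indicator measurableSet_Icc]
          rw [this]
          by_cases hs : s ∈ simplexSet (k + 1)
          · rw [Set.indicator_of_mem hs, Set.indicator_of_mem hs]
          · rw [Set.indicator_of_notMem hs, Set.indicator_of_notMem hs, mul_zero]
    _ = ∫ s in simplexSet (k + 1), (∫ x in Set.Icc (0:ℝ) (s 0), h 0 x) * Q s :=
          integral_indicator (measurableSet_simplexSet _)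

/-- If the first entry of an iterated integral is exact,
`∫_γ (df) ω₁⋯ω_s = ∫_γ (fω₁)ω₂⋯ω_s − f(γ(0)) ∫_γ ω₁⋯ω_s`. -/
theorem itInt_exact_first (f : ℂ → ℂ) (hf : ContDiff ℝ (⊤ : ℕ∞) f)
    (ω₁ : Form1) (ws : List Form1) (hω₁ : ContDiff ℝ (⊤ : ℕ∞) ω₁)
    (hws : ∀ w ∈ ws, ContDiff ℝ (⊤ : ℕ∞) w)
    (γ : ℝ → ℂ) (hγ : ContDiff ℝ (⊤ : ℕ∞) γ) :
    itInt γ (fderiv ℝ f :: ω₁ :: ws) =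
      itInt γ ((fun p => f p • ω₁ p) :: ws) - f (γ 0) * itInt γ (ω₁ :: ws) := by
  classical
  set n := ws.length with hn
  -- the pulled-back integrand functions for the big list
  set L2 : List Form1 := fderiv ℝ f :: ω₁ :: ws with hL2
  set h : Fin (n + 2) → ℝ → ℂ := fun i u => (L2.get i) (γ u) (deriv γ u) with hh
  have hL2mem : ∀ w ∈ L2, Continuous w := by
    intro w hw
    rcases List.mem_cons.1 hw with rfl | hw
    · exact hf.continuous_fderiv (by simp)
    rcases List.mem_cons.1 hw with rfl | hw
    · exact hω₁.continuous
    · exact (hws w hw).continuous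
  have hc : ∀ i, Continuous (h i) := fun i =>
    continuous_pullback (hL2mem _ (L2.get_mem i)) hγ
  -- chain rule: h 0 is the derivative of f ∘ γ
  set g : ℝ → ℂ := fun u => f (γ u) with hg
  have hgc : ContDiff ℝ (⊤ : ℕ∞) g := hf.comp hγ
  have hderiv : ∀ x : ℝ, HasDerivAt g (h 0 x) x := by
    intro x
    exact ((hf.differentiable (by simp) (γ x)).hasFDerivAt).comp_hasDerivAt x
      ((hγ.differentiable (by simp) x).hasDerivAt)
  have hIcc : ∀ b : ℝ, 0 ≤ b → (∫ x in Set.Icc (0:ℝ) b, h 0 x) = g b - g 0 := by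
    intro b hb
    rw [MeasureTheory.integral_Icc_eq_integral_Ioc, ← intervalIntegral.integral_of_le hb]
    have : ∀ x, deriv g x = h 0 x := fun x => (hderiv x).deriv
    rw [show (fun x => h 0 x) = deriv g from funext fun x => (this x).symm]
    exact intervalIntegral.integral_deriv_eq_sub
      (fun x _ => (hgc.differentiable (by simp) x))
      ((hgc.continuous_deriv (by simp)).intervalIntegrable 0 b)
  -- the product over the tail list ω₁ :: ws
  set Q : (Fin (n + 1) → ℝ) → ℂ :=
    fun s => ∏ i : Fin (n + 1), ((ω₁ :: ws).get i) (γ (s i)) (deriv γ (s i)) with hQdef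
  have hQc : Continuous Q := by
    refine continuous_finset_prod _ fun i _ => ?_
    refine (continuous_pullback ?_ hγ).comp (continuous_apply i)
    show Continuous ((ω₁ :: ws).get ⟨i.1, i.isLt⟩)
    rcases List.mem_cons.1 ((ω₁ :: ws).get_mem ⟨i.1, i.isLt⟩) with hmem | hmem
    · rw [hmem]; exact hω₁.continuous
    · exact (hws _ hmem).continuous
  have key : itInt γ L2 = ∫ s in simplexSet (n + 1), (g (s 0) - g 0) * Q s := by
    have h1 : itInt γ L2 = ∫ t in simplexSet (n + 2), ∏ i, h i (t i) := rfl
    rw [h1, simplex_first_integral n h hc]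
    refine setIntegral_congr_fun (measurableSet_simplexSet _) fun s hs => ?_
    have h0s : (0:ℝ) ≤ s 0 := (hs.2 0).1
    rw [hIcc (s 0) h0s]
    congr 1
  have hQint : IntegrableOn Q (simplexSet (n + 1)) :=
    hQc.continuousOn.integrableOn_compact (isCompact_simplexSet _)
  have hQint2 : IntegrableOn (fun s : Fin (n+1) → ℝ => g (s 0) * Q s) (simplexSet (n + 1)) := by
    refine ContinuousOn.integrableOn_compact (isCompact_simplexSet _) ?_
    exact ((hgc.continuous.comp (continuous_apply 0)).mul hQc).continuousOn
  have hsplit : (∫ s in simplexSet (n + 1), (g (s 0) - g 0) * Q s) =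
      (∫ s in simplexSet (n + 1), g (s 0) * Q s) - g 0 * ∫ s in simplexSet (n + 1), Q s := by
    have : ∀ s : Fin (n+1) → ℝ, (g (s 0) - g 0) * Q s = g (s 0) * Q s - g 0 * Q s := by
      intro s; ring
    simp_rw [this]
    rw [integral_sub hQint2 (hQint.const_mul (g 0)), integral_const_mul]
  have hrhs1 : (∫ s in simplexSet (n + 1), g (s 0) * Q s) =
      itInt γ ((fun p => f p • ω₁ p) :: ws) := by
    have h2 : itInt γ ((fun p => f p • ω₁ p) :: ws) =
        ∫ s in simplexSet (n + 1),
          ∏ i : Fin (n + 1),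
            (((fun p => f p • ω₁ p) :: ws).get i) (γ (s i)) (deriv γ (s i)) := rfl
    rw [h2]
    refine setIntegral_congr_fun (measurableSet_simplexSet _) fun s _ => ?_
    show g (s 0) * (∏ i : Fin (n + 1), ((ω₁ :: ws).get i) (γ (s i)) (deriv γ (s i))) =
      ∏ i : Fin (n + 1), (((fun p => f p • ω₁ p) :: ws).get i) (γ (s i)) (deriv γ (s i))
    rw [Fin.prod_univ_succ, Fin.prod_univ_succ, ← mul_assoc]
    rfl
  have hrhs2 : (∫ s in simplexSet (n + 1), Q s) = itInt γ (ω₁ :: ws) := rfl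
  rw [key, hsplit, hrhs1, hrhs2]
end
end

section
/- Let f be a smooth function, ω₁, …, ω_s smooth 1-forms, γ a path, and 1 < i ≤ s. Then ∫_γ ω₁⋯ω_{i−1} (df) ω_i⋯ω_s = ∫_γ ω₁⋯ω_{i−1}(fω_i)ω_{i+1}⋯ω_s − ∫_γ ω₁⋯(fω_{i−1})ω_i⋯ω_s, and moreover ∫_γ ω₁⋯ω_s (df) = f(γ(1)) ∫_γ ω₁⋯ω_s − ∫_γ ω₁⋯ω_{s−1}(fω_s). -/
noncomputable section

open MeasureTheory

namespace ItAux


/-- Recursive iterated integral `J gs a = ∫_{a ≤ t₁ ≤ … ≤ t_r ≤ 1} ∏ gᵢ(tᵢ)`. -/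
def J : List (ℝ → ℂ) → ℝ → ℂ
  | [], _ => 1
  | g :: gs, a => ∫ u in a..(1:ℝ), g u * J gs u

lemma J_nil (a : ℝ) : J [] a = 1 := rfl

lemma J_cons (g : ℝ → ℂ) (gs : List (ℝ → ℂ)) (a : ℝ) :
    J (g :: gs) a = ∫ u in a..(1:ℝ), g u * J gs u := rfl

lemma J_cont : ∀ (gs : List (ℝ → ℂ)), (∀ g ∈ gs, Continuous g) → Continuous (J gs)
  | [], _ => continuous_const
  | g :: gs, h => by
    have hg : Continuous g := h g (List.mem_cons_self)
    have htail : Continuous (J gs) := J_cont gs fun x hx => h x (List.mem_cons_of_mem _ hx)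
    have hmul : Continuous fun u => g u * J gs u := hg.mul htail
    have h1 : Continuous fun a => ∫ u in (1:ℝ)..a, g u * J gs u :=
      intervalIntegral.continuous_primitive (fun a b => hmul.intervalIntegrable a b) 1
    have h2 := h1.neg
    have : (fun a => J (g :: gs) a) = fun a => -∫ u in (1:ℝ)..a, g u * J gs u := by
      funext a
      rw [J_cons, intervalIntegral.integral_symm]
    rw [show J (g :: gs) = fun a => J (g :: gs) a from rfl, this]
    exact h2

lemma J_hasDerivAt (g : ℝ → ℂ) (gs : List (ℝ → ℂ)) (hg : Continuous g)
    (hgs : ∀ f ∈ gs, Continuous f) (x : ℝ) :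
    HasDerivAt (J (g :: gs)) (-(g x * J gs x)) x := by
  have hmul : Continuous fun u => g u * J gs u := hg.mul (J_cont gs hgs)
  have := intervalIntegral.integral_hasDerivAt_left (hmul.intervalIntegrable x 1)
    (hmul.stronglyMeasurableAtFilter _ _) hmul.continuousAt
  exact this

lemma J_one (g : ℝ → ℂ) (gs : List (ℝ → ℂ)) : J (g :: gs) 1 = 0 := by
  rw [J_cons, intervalIntegral.integral_same]

/-- Integration by parts step. -/
lemma J_parts (F F' g : ℝ → ℂ) (gs : List (ℝ → ℂ))
    (hF : ∀ x, HasDerivAt F (F' x) x) (hF' : Continuous F') (hFc : Continuous F)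
    (hg : Continuous g) (hgs : ∀ f ∈ gs, Continuous f) (x : ℝ) :
    J (F' :: g :: gs) x = J ((fun y => F y * g y) :: gs) x - F x * J (g :: gs) x := by
  have hv' : Continuous fun y => -(g y * J gs y) := (hg.mul (J_cont gs hgs)).neg
  have key := intervalIntegral.integral_mul_deriv_eq_deriv_mul
    (u := J (g :: gs)) (u' := fun y => -(g y * J gs y)) (v := F) (v' := F') (a := x) (b := 1)
    (fun y _ => J_hasDerivAt g gs hg hgs y) (fun y _ => hF y)
    (hv'.intervalIntegrable x 1) (hF'.intervalIntegrable x 1)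
  have lhs : J (F' :: g :: gs) x = ∫ y in x..(1:ℝ), J (g :: gs) y * F' y := by
    rw [J_cons]
    exact intervalIntegral.integral_congr fun y _ => mul_comm _ _
  rw [lhs, key, J_one]
  have : (∫ y in x..(1:ℝ), (fun y => -(g y * J gs y)) y * F y)
      = -∫ y in x..(1:ℝ), (F y * g y) * J gs y := by
    rw [← intervalIntegral.integral_neg]
    exact intervalIntegral.integral_congr fun y _ => by ring
  have rhs : J ((fun y => F y * g y) :: gs) x = ∫ y in x..(1:ℝ), F y * g y * J gs y := by
    rw [J_cons]
  rw [this, rhs]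
  ring

lemma J_cons_sub (pw F : ℝ → ℂ) (s s' s'' : List (ℝ → ℂ)) (c : ℂ)
    (hpw : Continuous pw) (hF : Continuous F)
    (hs' : ∀ f ∈ s', Continuous f) (hs'' : ∀ f ∈ s'', Continuous f)
    (h : ∀ x, J s x = c * J s' x - F x * J s'' x) (u : ℝ) :
    J (pw :: s) u = c * J (pw :: s') u - J ((fun x => F x * pw x) :: s'') u := by
  have hc' := J_cont s' hs'
  have hc'' := J_cont s'' hs''
  have h1 : Continuous fun x => pw x * J s' x := hpw.mul hc'
  have h2 : Continuous fun x => F x * pw x * J s'' x := (hF.mul hpw).mul hc''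
  rw [J_cons, J_cons, J_cons]
  rw [show (∫ x in u..(1:ℝ), pw x * J s x)
      = ∫ x in u..(1:ℝ), (c * (pw x * J s' x) - F x * pw x * J s'' x) from
    intervalIntegral.integral_congr fun x _ => by rw [h x]; ring]
  rw [intervalIntegral.integral_sub ((h1.intervalIntegrable u 1).const_mul c)
    (h2.intervalIntegrable u 1), intervalIntegral.integral_const_mul]

lemma J_append_sub (t₁ t₂ t₃ : List (ℝ → ℂ)) (c : ℂ)
    (h1 : ∀ f ∈ t₁, Continuous f) (h2 : ∀ f ∈ t₂, Continuous f) (h3 : ∀ f ∈ t₃, Continuous f)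
    (h : ∀ u, J t₁ u = c * J t₂ u - J t₃ u) :
    ∀ (l : List (ℝ → ℂ)), (∀ f ∈ l, Continuous f) →
      ∀ a, J (l ++ t₁) a = c * J (l ++ t₂) a - J (l ++ t₃) a
  | [], _, a => h a
  | g :: l, hl, a => by
    have hg : Continuous g := hl g (List.mem_cons_self)
    have hl' : ∀ f ∈ l, Continuous f := fun f hf => hl f (List.mem_cons_of_mem _ hf)
    have ih := J_append_sub t₁ t₂ t₃ c h1 h2 h3 h l hl'
    have c2 : Continuous (J (l ++ t₂)) := J_cont _ fun f hf => by
      rcases List.mem_append.mp hf with hf | hf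
      exacts [hl' f hf, h2 f hf]
    have c3 : Continuous (J (l ++ t₃)) := J_cont _ fun f hf => by
      rcases List.mem_append.mp hf with hf | hf
      exacts [hl' f hf, h3 f hf]
    have hi2 : Continuous fun x => g x * J (l ++ t₂) x := hg.mul c2
    have hi3 : Continuous fun x => g x * J (l ++ t₃) x := hg.mul c3
    show J (g :: (l ++ t₁)) a = c * J (g :: (l ++ t₂)) a - J (g :: (l ++ t₃)) a
    rw [J_cons, J_cons, J_cons]
    rw [show (∫ x in a..(1:ℝ), g x * J (l ++ t₁) x)
        = ∫ x in a..(1:ℝ), (c * (g x * J (l ++ t₂) x) - g x * J (l ++ t₃) x) from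
      intervalIntegral.integral_congr fun x _ => by rw [ih x]; ring]
    rw [intervalIntegral.integral_sub ((hi2.intervalIntegrable a 1).const_mul c)
      (hi3.intervalIntegrable a 1), intervalIntegral.integral_const_mul]

lemma J_single (F F' : ℝ → ℂ) (hF : ∀ x, HasDerivAt F (F' x) x) (hF' : Continuous F') (x : ℝ) :
    J [F'] x = F 1 - F x := by
  rw [J_cons]
  rw [show (∫ u in x..(1:ℝ), F' u * J [] u) = ∫ u in x..(1:ℝ), F' u from
    intervalIntegral.integral_congr fun u _ => by rw [J_nil, mul_one]]
  exact intervalIntegral.integral_eq_sub_of_hasDerivAt (fun u _ => hF u)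
    (hF'.intervalIntegrable x 1)

lemma monotone_closed (n : ℕ) : IsClosed {t : Fin n → ℝ | Monotone t} := by
  have : {t : Fin n → ℝ | Monotone t}
      = ⋂ (i : Fin n) (j : Fin n) (_ : i ≤ j), {t : Fin n → ℝ | t i ≤ t j} := by
    ext t
    simp only [Set.mem_setOf_eq, Set.mem_iInter]
    exact ⟨fun h i j hij => h hij, fun h i j hij => h i j hij⟩
  rw [this]
  exact isClosed_iInter fun i => isClosed_iInter fun j => isClosed_iInter fun _ =>
    isClosed_le (continuous_apply i) (continuous_apply j)

lemma simplex_closed (n : ℕ) (a b : ℝ) :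
    IsClosed {t : Fin n → ℝ | Monotone t ∧ ∀ i, t i ∈ Set.Icc a b} := by
  have : {t : Fin n → ℝ | Monotone t ∧ ∀ i, t i ∈ Set.Icc a b}
      = {t : Fin n → ℝ | Monotone t} ∩ ⋂ i, (fun t : Fin n → ℝ => t i) ⁻¹' Set.Icc a b := by
    ext t
    simp only [Set.mem_setOf_eq, Set.mem_inter_iff, Set.mem_iInter, Set.mem_preimage]
  rw [this]
  exact (monotone_closed n).inter
    (isClosed_iInter fun i => isClosed_Icc.preimage (continuous_apply i))

lemma cons_mem_simplex {n : ℕ} (a u : ℝ) (s : Fin n → ℝ) :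
    (Monotone (Fin.cons u s : Fin (n+1) → ℝ) ∧ ∀ i, (Fin.cons u s : Fin (n+1) → ℝ) i ∈ Set.Icc a 1)
      ↔ (u ∈ Set.Icc a 1 ∧ Monotone s ∧ ∀ j, s j ∈ Set.Icc u 1) := by
  constructor
  · rintro ⟨hm, hi⟩
    refine ⟨hi 0, fun i j hij => ?_, fun j => ⟨?_, ?_⟩⟩
    · have := hm (Fin.succ_le_succ_iff.mpr hij)
      simpa using this
    · have := hm (Fin.zero_le j.succ)
      simpa using this
    · exact (hi j.succ).2
  · rintro ⟨hu, hm, hj⟩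
    constructor
    · intro i j hij
      induction i using Fin.cases with
      | zero =>
        induction j using Fin.cases with
        | zero => exact le_refl _
        | succ j => simpa using (hj j).1
      | succ i =>
        induction j using Fin.cases with
        | zero => exact absurd (le_antisymm hij (Fin.zero_le _)) (Fin.succ_ne_zero i)
        | succ j => simpa using hm (Fin.succ_le_succ_iff.mp hij)
    · intro i
      induction i using Fin.cases with
      | zero => simpa using hu
      | succ i =>
        simpa using ⟨le_trans hu.1 (hj i).1, (hj i).2⟩

lemma simplex_eq_J : ∀ (n : ℕ) (g : Fin n → ℝ → ℂ), (∀ i, Continuous (g i)) →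
    ∀ a : ℝ, a ≤ 1 →
    (∫ t in {t : Fin n → ℝ | Monotone t ∧ ∀ i, t i ∈ Set.Icc a 1},
      ∏ i, g i (t i)) = J (List.ofFn g) a
  | 0, g, hg, a, ha => by
    have huniv : {t : Fin 0 → ℝ | Monotone t ∧ ∀ i, t i ∈ Set.Icc a 1} = Set.univ := by
      ext t
      simp only [Set.mem_setOf_eq, Set.mem_univ, iff_true]
      exact ⟨fun i j _ => i.elim0, fun i => i.elim0⟩
    rw [huniv, List.ofFn_zero, Measure.restrict_univ]
    simp only [Finset.univ_eq_empty, Finset.prod_empty, J_nil]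
    rw [integral_const]
    rw [show (volume : Measure (Fin 0 → ℝ)).real Set.univ = 1 by
      simp [Measure.real, volume_pi, Measure.pi_univ]]
    simp
  | (n+1), g, hg, a, ha => by
    set S : Set (Fin (n+1) → ℝ) := {t | Monotone t ∧ ∀ i, t i ∈ Set.Icc a 1} with hS
    have hSm : MeasurableSet S := (simplex_closed (n+1) a 1).measurableSet
    set P : (Fin (n+1) → ℝ) → ℂ := fun t => ∏ i, g i (t i) with hPdef
    set A : Set (ℝ × (Fin n → ℝ)) :=
      {p | p.1 ∈ Set.Icc a 1 ∧ Monotone p.2 ∧ ∀ j, p.2 j ∈ Set.Icc p.1 1} with hAdef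
    have hAclosed : IsClosed A := by
      have : A = ((fun p : ℝ × (Fin n → ℝ) => p.1) ⁻¹' Set.Icc a 1)
          ∩ ((fun p : ℝ × (Fin n → ℝ) => p.2) ⁻¹' {s | Monotone s})
          ∩ ⋂ j, {p : ℝ × (Fin n → ℝ) | p.1 ≤ p.2 j ∧ p.2 j ≤ 1} := by
        ext p
        simp only [hAdef, Set.mem_setOf_eq, Set.mem_inter_iff, Set.mem_preimage,
          Set.mem_iInter, Set.mem_Icc]
        constructor
        · rintro ⟨h1, h2, h3⟩; exact ⟨⟨h1, h2⟩, fun j => ⟨(h3 j).1, (h3 j).2⟩⟩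
        · rintro ⟨⟨h1, h2⟩, h3⟩; exact ⟨h1, h2, fun j => ⟨(h3 j).1, (h3 j).2⟩⟩
      rw [this]
      refine ((isClosed_Icc.preimage continuous_fst).inter
        ((monotone_closed n).preimage continuous_snd)).inter (isClosed_iInter fun j => ?_)
      have hsnd : Continuous fun p : ℝ × (Fin n → ℝ) => p.2 j :=
        (continuous_apply j).comp continuous_snd
      exact (isClosed_le continuous_fst hsnd).inter (isClosed_le hsnd continuous_const)
    have hAm : MeasurableSet A := hAclosed.measurableSet
    set Q : ℝ × (Fin n → ℝ) → ℂ := fun p => g 0 p.1 * ∏ j, g j.succ (p.2 j) with hQdef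
    have hQc : Continuous Q := by
      refine ((hg 0).comp continuous_fst).mul (continuous_finset_prod _ fun j _ => ?_)
      exact (hg j.succ).comp ((continuous_apply j).comp continuous_snd)
    rw [← integral_indicator hSm]
    rw [volume_pi]
    have mp := (measurePreserving_piFinSuccAbove (fun _ : Fin (n+1) => (volume : Measure ℝ)) 0).symm
    rw [← mp.integral_comp (MeasurableEquiv.measurableEmbedding _) (S.indicator P)]
    have hpt : ∀ p : ℝ × (Fin n → ℝ),
        S.indicator P ((MeasurableEquiv.piFinSuccAbove (fun _ => ℝ) 0).symm p)
          = A.indicator Q p := by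
      rintro ⟨u, t⟩
      have he : (MeasurableEquiv.piFinSuccAbove (fun _ : Fin (n+1) => ℝ) 0).symm (u, t)
          = Fin.cons u t := by
        simp [MeasurableEquiv.piFinSuccAbove, Fin.insertNthEquiv, Fin.insertNth_zero]
      rw [he]
      by_cases hmem : (u, t) ∈ A
      · have h1 : (Fin.cons u t : Fin (n+1) → ℝ) ∈ S :=
          (cons_mem_simplex a u t).mpr ⟨hmem.1, hmem.2.1, hmem.2.2⟩
        rw [Set.indicator_of_mem h1 P, Set.indicator_of_mem hmem Q]
        simp only [hPdef, hQdef]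
        rw [Fin.prod_univ_succ]
        simp [Fin.cons_succ]
      · have h1 : (Fin.cons u t : Fin (n+1) → ℝ) ∉ S := fun hc => hmem
          (show (u, t) ∈ A from
            let h := (cons_mem_simplex a u t).mp hc; ⟨h.1, h.2.1, h.2.2⟩)
        rw [Set.indicator_of_notMem h1 P, Set.indicator_of_notMem hmem Q]
    simp only [hpt]
    have hK : IsCompact ((Set.Icc a 1) ×ˢ (Set.pi Set.univ fun _ : Fin n => Set.Icc a 1)) :=
      isCompact_Icc.prod (isCompact_univ_pi fun _ => isCompact_Icc)
    have hAK : A ⊆ (Set.Icc a 1) ×ˢ (Set.pi Set.univ fun _ : Fin n => Set.Icc a 1) := by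
      rintro ⟨u, t⟩ ⟨h1, _, h3⟩
      exact ⟨h1, fun j _ => ⟨le_trans h1.1 (h3 j).1, (h3 j).2⟩⟩
    have hAcomp : IsCompact A := hK.of_isClosed_subset hAclosed hAK
    have hint : Integrable (A.indicator Q) (volume : Measure (ℝ × (Fin n → ℝ))) :=
      (hQc.continuousOn.integrableOn_compact hAcomp).integrable_indicator hAm
    rw [show ((volume : Measure ℝ).prod (Measure.pi fun _ : Fin n => (volume : Measure ℝ)))
        = (volume : Measure (ℝ × (Fin n → ℝ))) by
      rw [← volume_pi, ← Measure.volume_eq_prod]]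
    rw [Measure.volume_eq_prod, integral_prod _ (by rwa [← Measure.volume_eq_prod])]
    have inner : ∀ u : ℝ, (∫ t, A.indicator Q (u, t))
        = (Set.Icc a 1).indicator
            (fun u => g 0 u * J (List.ofFn fun j : Fin n => g j.succ) u) u := by
      intro u
      by_cases hu : u ∈ Set.Icc a 1
      · rw [Set.indicator_of_mem hu]
        have hpt2 : ∀ t : Fin n → ℝ, A.indicator Q (u, t)
            = Set.indicator {t : Fin n → ℝ | Monotone t ∧ ∀ j, t j ∈ Set.Icc u 1}
                (fun t => g 0 u * ∏ j, g j.succ (t j)) t := by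
          intro t
          by_cases hs : t ∈ {t : Fin n → ℝ | Monotone t ∧ ∀ j, t j ∈ Set.Icc u 1}
          · rw [Set.indicator_of_mem (show (u, t) ∈ A from ⟨hu, hs.1, hs.2⟩) Q,
              Set.indicator_of_mem hs]
          · rw [Set.indicator_of_notMem (show (u, t) ∉ A from
                fun hc => hs ⟨hc.2.1, hc.2.2⟩) Q,
              Set.indicator_of_notMem hs]
        simp only [hpt2]
        rw [integral_indicator (simplex_closed n u 1).measurableSet, integral_const_mul,
          simplex_eq_J n (fun j => g j.succ) (fun j => hg j.succ) u hu.2]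
      · rw [Set.indicator_of_notMem hu]
        have hz : ∀ t : Fin n → ℝ, A.indicator Q (u, t) = 0 := fun t =>
          Set.indicator_of_notMem (fun hc : (u, t) ∈ A => hu hc.1) _
        simp only [hz, integral_zero]
    simp only [inner]
    rw [integral_indicator measurableSet_Icc, MeasureTheory.integral_Icc_eq_integral_Ioc,
      ← intervalIntegral.integral_of_le ha, List.ofFn_succ, J_cons]


lemma itInt_eq_J (γ : ℝ → ℂ) (ws : List Form1)
    (h : ∀ i : Fin ws.length, Continuous fun t => (ws.get i) (γ t) (deriv γ t)) :
    itInt γ ws = J (ws.map fun w => fun t => w (γ t) (deriv γ t)) 0 := by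
  rw [← List.ofFn_getElem_eq_map ws fun w => fun t => w (γ t) (deriv γ t)]
  exact simplex_eq_J ws.length (fun i => fun t => (ws.get i) (γ t) (deriv γ t)) h 0 zero_le_one

end ItAux

open ItAux in
/-- If an exact form `df` occurs in the middle (after `ω_{i-1}`, before `ω_i`,
with `1 < i ≤ s`) of an iterated integral then
`∫_γ ω₁⋯ω_{i−1}(df)ω_i⋯ω_s = ∫_γ ω₁⋯ω_{i−1}(fω_i)⋯ω_s − ∫_γ ω₁⋯(fω_{i−1})ω_i⋯ω_s`;
and if `df` occurs at the end,
`∫_γ ω₁⋯ω_s(df) = f(γ(1)) ∫_γ ω₁⋯ω_s − ∫_γ ω₁⋯ω_{s−1}(fω_s)`. -/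
theorem itInt_exact_middle_and_last (f : ℂ → ℂ) (hf : ContDiff ℝ (⊤ : ℕ∞) f)
    (ω ω' : Form1) (ws₁ ws₂ : List Form1)
    (hω : ContDiff ℝ (⊤ : ℕ∞) ω) (hω' : ContDiff ℝ (⊤ : ℕ∞) ω')
    (hws₁ : ∀ w ∈ ws₁, ContDiff ℝ (⊤ : ℕ∞) w) (hws₂ : ∀ w ∈ ws₂, ContDiff ℝ (⊤ : ℕ∞) w)
    (γ : ℝ → ℂ) (hγ : ContDiff ℝ (⊤ : ℕ∞) γ) :
    (itInt γ (ws₁ ++ [ω] ++ [fderiv ℝ f] ++ (ω' :: ws₂)) =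
        itInt γ (ws₁ ++ [ω] ++ ((fun p => f p • ω' p) :: ws₂)) -
          itInt γ (ws₁ ++ [fun p => f p • ω p] ++ (ω' :: ws₂))) ∧
    (itInt γ (ws₁ ++ [ω] ++ [fderiv ℝ f]) =
        f (γ 1) * itInt γ (ws₁ ++ [ω]) -
          itInt γ (ws₁ ++ [fun p => f p • ω p])) := by
  classical
  set pull : Form1 → ℝ → ℂ := fun w => fun t => w (γ t) (deriv γ t) with hpull
  have hγc : Continuous γ := hγ.continuous
  have hγ' : Continuous (deriv γ) := hγ.continuous_deriv (by simp)
  have hpc : ∀ w : Form1, Continuous w → Continuous (pull w) := fun w hw =>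
    Continuous.clm_apply (hw.comp hγc) hγ'
  set F : ℝ → ℂ := fun t => f (γ t) with hFdef
  have hdf : ∀ x, HasDerivAt F (pull (fderiv ℝ f) x) x := fun x =>
    ((hf.differentiable (by simp) (γ x)).hasFDerivAt).comp_hasDerivAt x
      ((hγ.differentiable (by simp) x).hasDerivAt)
  have hFc : Continuous F := hf.continuous.comp hγc
  have hdfc : Continuous (pull (fderiv ℝ f)) := hpc _ (hf.continuous_fderiv (by simp))
  have hωc : Continuous (pull ω) := hpc ω hω.continuous
  have hω'c : Continuous (pull ω') := hpc ω' hω'.continuous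
  have hm₁ : ∀ g ∈ ws₁.map pull, Continuous g := by
    intro g hg
    rcases List.mem_map.mp hg with ⟨w, hw, rfl⟩
    exact hpc w (hws₁ w hw).continuous
  have hm₂ : ∀ g ∈ ws₂.map pull, Continuous g := by
    intro g hg
    rcases List.mem_map.mp hg with ⟨w, hw, rfl⟩
    exact hpc w (hws₂ w hw).continuous
  have hsmul : ∀ w : Form1, pull (fun p => f p • w p) = fun x => F x * pull w x := by
    intro w
    funext x
    simp only [hpull, hFdef, ContinuousLinearMap.smul_apply, smul_eq_mul]
  have key : ∀ L : List Form1, (∀ w ∈ L, Continuous (pull w)) →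
      itInt γ L = J (L.map pull) 0 := fun L hL =>
    itInt_eq_J γ L fun i => hL _ (L.get_mem _)
  -- continuity of pulls of all relevant forms
  have hsm : Continuous (pull (fun p => f p • ω p)) := by
    rw [hsmul ω]; exact hFc.mul hωc
  have hsm' : Continuous (pull (fun p => f p • ω' p)) := by
    rw [hsmul ω']; exact hFc.mul hω'c
  have memc : ∀ (L : List Form1), (∀ w ∈ L, Continuous (pull w)) →
      ∀ (w₀ : Form1), Continuous (pull w₀) →
      ∀ w ∈ (L ++ [w₀]), Continuous (pull w) := by
    intro L hL w₀ h₀ w hw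
    rcases List.mem_append.mp hw with h | h
    · exact hL w h
    · rcases List.mem_singleton.mp h with rfl
      exact h₀
  have hws₁c : ∀ w ∈ ws₁, Continuous (pull w) := fun w hw => hpc w (hws₁ w hw).continuous
  have hws₂c : ∀ w ∈ ws₂, Continuous (pull w) := fun w hw => hpc w (hws₂ w hw).continuous
  have hcons : ∀ (w₀ : Form1), Continuous (pull w₀) → ∀ (L : List Form1),
      (∀ w ∈ L, Continuous (pull w)) → ∀ w ∈ (w₀ :: L), Continuous (pull w) := by
    intro w₀ h₀ L hL w hw
    rcases List.mem_cons.mp hw with rfl | h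
    exacts [h₀, hL w h]
  -- list-level continuity facts
  have hL1 : ∀ w ∈ (ws₁ ++ [ω] ++ [fderiv ℝ f] ++ (ω' :: ws₂)), Continuous (pull w) :=
    memc _ (memc _ (memc _ hws₁c ω hωc) _ hdfc) ω' hω'c |> fun h => by
      intro w hw
      rcases List.mem_append.mp hw with h' | h'
      · exact (memc _ (memc _ hws₁c ω hωc) _ hdfc) w h'
      · exact hcons ω' hω'c ws₂ hws₂c w h'
  have hL2 : ∀ w ∈ (ws₁ ++ [ω] ++ ((fun p => f p • ω' p) :: ws₂)), Continuous (pull w) := by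
    intro w hw
    rcases List.mem_append.mp hw with h' | h'
    · exact memc _ hws₁c ω hωc w h'
    · exact hcons _ hsm' ws₂ hws₂c w h'
  have hL3 : ∀ w ∈ (ws₁ ++ [fun p => f p • ω p] ++ (ω' :: ws₂)), Continuous (pull w) := by
    intro w hw
    rcases List.mem_append.mp hw with h' | h'
    · exact memc _ hws₁c _ hsm w h'
    · exact hcons ω' hω'c ws₂ hws₂c w h'
  have hL4 : ∀ w ∈ (ws₁ ++ [ω] ++ [fderiv ℝ f]), Continuous (pull w) :=
    memc _ (memc _ hws₁c ω hωc) _ hdfc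
  have hL5 : ∀ w ∈ (ws₁ ++ [ω]), Continuous (pull w) := memc _ hws₁c ω hωc
  have hL6 : ∀ w ∈ (ws₁ ++ [fun p => f p • ω p]), Continuous (pull w) :=
    memc _ hws₁c _ hsm
  -- continuity of mixed tails
  have ht2 : ∀ g ∈ ((fun y => F y * pull ω' y) :: ws₂.map pull), Continuous g := by
    intro g hg
    rcases List.mem_cons.mp hg with rfl | h
    exacts [hFc.mul hω'c, hm₂ g h]
  have ht3 : ∀ g ∈ (pull ω' :: ws₂.map pull), Continuous g := by
    intro g hg
    rcases List.mem_cons.mp hg with rfl | h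
    exacts [hω'c, hm₂ g h]
  constructor
  · -- middle case
    rw [key _ hL1, key _ hL2, key _ hL3]
    simp only [List.map_append, List.map_cons, List.map_nil, List.append_assoc,
      List.singleton_append, List.cons_append, List.nil_append]
    rw [hsmul ω, hsmul ω']
    have inner : ∀ x, J (pull (fderiv ℝ f) :: pull ω' :: ws₂.map pull) x
        = 1 * J ((fun y => F y * pull ω' y) :: ws₂.map pull) x
          - F x * J (pull ω' :: ws₂.map pull) x := by
      intro x
      rw [one_mul]
      exact J_parts F (pull (fderiv ℝ f)) (pull ω') (ws₂.map pull) hdf hdfc hFc hω'c hm₂ x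
    have h' : ∀ u, J (pull ω :: pull (fderiv ℝ f) :: pull ω' :: ws₂.map pull) u
        = 1 * J (pull ω :: (fun y => F y * pull ω' y) :: ws₂.map pull) u
          - J ((fun x => F x * pull ω x) :: pull ω' :: ws₂.map pull) u :=
      J_cons_sub (pull ω) F _ _ _ 1 hωc hFc ht2 ht3 inner
    have t1c : ∀ g ∈ (pull ω :: pull (fderiv ℝ f) :: pull ω' :: ws₂.map pull), Continuous g := by
      intro g hg
      rcases List.mem_cons.mp hg with rfl | hg
      · exact hωc
      rcases List.mem_cons.mp hg with rfl | hg
      · exact hdfc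
      exact ht3 g hg
    have t2c : ∀ g ∈ (pull ω :: (fun y => F y * pull ω' y) :: ws₂.map pull), Continuous g := by
      intro g hg
      rcases List.mem_cons.mp hg with rfl | hg
      exacts [hωc, ht2 g hg]
    have t3c : ∀ g ∈ ((fun x => F x * pull ω x) :: pull ω' :: ws₂.map pull), Continuous g := by
      intro g hg
      rcases List.mem_cons.mp hg with rfl | hg
      exacts [hFc.mul hωc, ht3 g hg]
    have := J_append_sub _ _ _ 1 t1c t2c t3c h' (ws₁.map pull) hm₁ 0
    rw [one_mul] at this
    exact this
  · -- last case
    rw [key _ hL4, key _ hL5, key _ hL6]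
    simp only [List.map_append, List.map_cons, List.map_nil, List.append_assoc,
      List.singleton_append, List.cons_append, List.nil_append]
    rw [hsmul ω]
    have inner : ∀ x, J [pull (fderiv ℝ f)] x = F 1 * J ([] : List (ℝ → ℂ)) x
        - F x * J ([] : List (ℝ → ℂ)) x := by
      intro x
      rw [J_nil, mul_one, mul_one]
      exact J_single F (pull (fderiv ℝ f)) hdf hdfc x
    have h' : ∀ u, J [pull ω, pull (fderiv ℝ f)] u
        = F 1 * J [pull ω] u - J [fun x => F x * pull ω x] u :=
      J_cons_sub (pull ω) F _ _ _ (F 1) hωc hFc (by simp) (by simp) inner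
    have t1c : ∀ g ∈ [pull ω, pull (fderiv ℝ f)], Continuous g := by
      intro g hg
      rcases List.mem_cons.mp hg with rfl | hg
      · exact hωc
      rcases List.mem_cons.mp hg with rfl | hg
      · exact hdfc
      exact absurd hg (List.not_mem_nil)
    have t2c : ∀ g ∈ [pull ω], Continuous g := by
      intro g hg
      rcases List.mem_cons.mp hg with rfl | hg
      · exact hωc
      exact absurd hg (List.not_mem_nil)
    have t3c : ∀ g ∈ [fun x => F x * pull ω x], Continuous g := by
      intro g hg
      rcases List.mem_cons.mp hg with rfl | hg
      · exact hFc.mul hωc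
      exact absurd hg (List.not_mem_nil)
    exact J_append_sub _ _ _ (F 1) t1c t2c t3c h' (ws₁.map pull) hm₁ 0
end
end
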